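/- arXiv:0907.3314 — 10 statements merged into one kernel-verified Lean document; each statement's English description precedes it below -/
import Mathlib

section
/- Fix k ∈ ℕ and a nonempty finite set D of partitions of {1,…,k}. Then there exists N ∈ ℕ such that for every integer n ≥ N the Gram matrix G_{kn}, i.e. the real D×D matrix with entries G_{kn}(π,σ) = n^{|π∨σ|}, is invertible. -/
/-- The number of blocks of a partition (setoid). -/
noncomputable def numBlocks {α : Type*} (π : Setoid α) : ℕ := Nat.card (Quotient π)

/-- The Gram matrix `G_{kn}(π,σ) = n^{|π ∨ σ|}` for a set `D` of partitions of `{1,…,k}`. -/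
noncomputable def gramMatrix {k : ℕ} (D : Finset (Setoid (Fin k))) (n : ℕ) :
    Matrix {π // π ∈ D} {π // π ∈ D} ℝ :=
  fun π σ => (n : ℝ) ^ numBlocks (π.1 ⊔ σ.1)

section aux

variable {α : Type*} [Finite α] {r s : Setoid α}

/-- the canonical surjection between quotients when `r ≤ s`. -/
noncomputable def quotMap (h : r ≤ s) : Quotient r → Quotient s :=
  Quotient.map' id (fun _ _ hab => h hab)

lemma quotMap_surjective (h : r ≤ s) : Function.Surjective (quotMap h) := by
  intro x
  induction x using Quotient.ind
  exact ⟨Quotient.mk'' _, rfl⟩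

lemma numBlocks_le_of_le (h : r ≤ s) : numBlocks s ≤ numBlocks r :=
  Nat.card_le_card_of_surjective _ (quotMap_surjective h)

lemma le_of_numBlocks_eq (h : r ≤ s) (hc : numBlocks s = numBlocks r) : s ≤ r := by
  have hbij : Function.Bijective (quotMap h) :=
    (Nat.bijective_iff_surjective_and_card _).mpr ⟨quotMap_surjective h, hc.symm⟩
  intro x y hxy
  have : quotMap h (Quotient.mk'' x) = quotMap h (Quotient.mk'' y) := by
    simp only [quotMap, Quotient.map'_mk'', id]
    exact Quotient.sound' hxy
  have := hbij.1 this
  exact Quotient.exact' this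

end aux

open scoped Classical in
theorem gram_invertible {k : ℕ} (D : Finset (Setoid (Fin k))) (hD : D.Nonempty) :
    ∃ N : ℕ, ∀ n : ℕ, N ≤ n → IsUnit (gramMatrix D n) := by
  set ι := {π // π ∈ D}
  set S : ℕ := ∑ π : ι, numBlocks π.1 with hS
  set e : Equiv.Perm ι → ℕ := fun τ => ∑ π : ι, numBlocks ((τ π).1 ⊔ π.1) with he
  -- e ≤ S with equality iff τ = 1
  have heS : ∀ τ : Equiv.Perm ι, e τ ≤ S := fun τ =>
    Finset.sum_le_sum (fun π _ => numBlocks_le_of_le le_sup_right)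
  have heq : ∀ τ : Equiv.Perm ι, e τ = S → τ = 1 := by
    intro τ hτ
    have h1 : ∀ π : ι, numBlocks ((τ π).1 ⊔ π.1) = numBlocks π.1 := by
      intro π
      have := (Finset.sum_eq_sum_iff_of_le
        (fun π (_ : π ∈ Finset.univ) => numBlocks_le_of_le (le_sup_right (a := (τ π).1)))).mp hτ
      exact this π (Finset.mem_univ π)
    have hle : ∀ π : ι, (τ π).1 ≤ π.1 := by
      intro π
      have := le_of_numBlocks_eq le_sup_right (h1 π)
      exact le_trans le_sup_left this
    -- other direction
    have hS2 : ∑ π : ι, numBlocks (τ π).1 = S := by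
      rw [hS]
      exact Equiv.sum_comp τ (fun π => numBlocks π.1)
    have h2 : ∀ π : ι, numBlocks ((τ π).1 ⊔ π.1) = numBlocks (τ π).1 := by
      intro π
      have hτ' : e τ = ∑ π : ι, numBlocks (τ π).1 := by rw [hS2, hτ]
      have := (Finset.sum_eq_sum_iff_of_le
        (fun π (_ : π ∈ Finset.univ) => numBlocks_le_of_le (le_sup_left (b := π.1)))).mp hτ'
      exact this π (Finset.mem_univ π)
    have hge : ∀ π : ι, π.1 ≤ (τ π).1 := by
      intro π
      have := le_of_numBlocks_eq le_sup_left (h2 π)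
      exact le_trans le_sup_right this
    ext π : 1
    have : (τ π).1 = π.1 := le_antisymm (hle π) (hge π)
    simp [Subtype.ext this]
  -- the determinant as a sum of signed powers of n
  have hdet : ∀ n : ℕ, (gramMatrix D n).det
      = ∑ τ : Equiv.Perm ι, (Equiv.Perm.sign τ : ℝ) * (n : ℝ) ^ e τ := by
    intro n
    rw [Matrix.det_apply]
    refine Finset.sum_congr rfl fun τ _ => ?_
    have hp : ∏ i, gramMatrix D n (τ i) i = (n : ℝ) ^ e τ := by
      simp only [gramMatrix, he]
      rw [Finset.prod_pow_eq_pow_sum]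
    rw [Units.smul_def, zsmul_eq_mul, hp]
  refine ⟨Fintype.card (Equiv.Perm ι) + 1, fun n hn => ?_⟩
  have hn1 : 1 ≤ n := le_trans (Nat.le_add_left 1 _) hn
  have hnR : (1 : ℝ) ≤ (n : ℝ) := by exact_mod_cast hn1
  refine (Matrix.isUnit_iff_isUnit_det _).mpr (isUnit_iff_ne_zero.mpr ?_)
  rw [hdet n]
  -- split off the identity
  have hmem : (1 : Equiv.Perm ι) ∈ (Finset.univ : Finset (Equiv.Perm ι)) := Finset.mem_univ _
  rw [← Finset.add_sum_erase _ _ hmem]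
  have hrest : |∑ τ ∈ Finset.univ.erase (1 : Equiv.Perm ι),
      (Equiv.Perm.sign τ : ℝ) * (n : ℝ) ^ e τ| < (n : ℝ) ^ S := by
    by_cases hemp : (Finset.univ.erase (1 : Equiv.Perm ι)).Nonempty
    · obtain ⟨τ0, hτ0⟩ := hemp
      have hτ0ne : τ0 ≠ 1 := Finset.ne_of_mem_erase hτ0
      have hS1 : 1 ≤ S := by
        have := lt_of_le_of_ne (heS τ0) (fun h => hτ0ne (heq τ0 h))
        omega
      calc |∑ τ ∈ Finset.univ.erase (1 : Equiv.Perm ι),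
            (Equiv.Perm.sign τ : ℝ) * (n : ℝ) ^ e τ|
          ≤ ∑ τ ∈ Finset.univ.erase (1 : Equiv.Perm ι),
            |(Equiv.Perm.sign τ : ℝ) * (n : ℝ) ^ e τ| := Finset.abs_sum_le_sum_abs _ _
        _ ≤ ∑ τ ∈ Finset.univ.erase (1 : Equiv.Perm ι), (n : ℝ) ^ (S - 1) := by
            refine Finset.sum_le_sum fun τ hτ => ?_
            have hτne : τ ≠ 1 := Finset.ne_of_mem_erase hτ
            have hlt : e τ < S := lt_of_le_of_ne (heS τ) (fun h => hτne (heq τ h))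
            have hle' : e τ ≤ S - 1 := by omega
            rw [abs_mul]
            have hsign : |(Equiv.Perm.sign τ : ℝ)| = 1 := by
              rcases Int.units_eq_one_or (Equiv.Perm.sign τ) with h | h <;> simp [h]
            rw [hsign, one_mul, abs_of_nonneg (by positivity)]
            exact pow_le_pow_right₀ hnR hle'
        _ = (Finset.univ.erase (1 : Equiv.Perm ι)).card * (n : ℝ) ^ (S - 1) := by
            rw [Finset.sum_const, nsmul_eq_mul]
        _ < (n : ℝ) * (n : ℝ) ^ (S - 1) := by
            apply mul_lt_mul_of_pos_right _ (by positivity)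
            have hcard : (Finset.univ.erase (1 : Equiv.Perm ι)).card
                < Fintype.card (Equiv.Perm ι) + 1 := by
              have := Finset.card_erase_le (s := (Finset.univ : Finset (Equiv.Perm ι)))
                (a := (1 : Equiv.Perm ι))
              simp only [Finset.card_univ] at this
              omega
            calc ((Finset.univ.erase (1 : Equiv.Perm ι)).card : ℝ)
                < (Fintype.card (Equiv.Perm ι) + 1 : ℕ) := by exact_mod_cast hcard
              _ ≤ (n : ℝ) := by exact_mod_cast hn
        _ = (n : ℝ) ^ S := by
            rw [← pow_succ']
            congr 1
            omega
    · rw [Finset.not_nonempty_iff_eq_empty] at hemp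
      rw [hemp, Finset.sum_empty, abs_zero]
      positivity
  have hid : (Equiv.Perm.sign (1 : Equiv.Perm ι) : ℝ) * (n : ℝ) ^ e 1 = (n : ℝ) ^ S := by
    have : e 1 = S := by simp [he, hS]
    simp [this]
  rw [hid]
  intro hzero
  have : (n : ℝ) ^ S = |∑ τ ∈ Finset.univ.erase (1 : Equiv.Perm ι),
      (Equiv.Perm.sign τ : ℝ) * (n : ℝ) ^ e τ| := by
    have h := eq_neg_of_add_eq_zero_right hzero
    rw [h, abs_neg, abs_of_nonneg (by positivity)]
  exact absurd hrest (by rw [← this]; exact lt_irrefl _)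
end

section
/- Fix k ∈ ℕ, a nonempty finite set D of partitions of {1,…,k}, and π, σ ∈ D. Then there exist a constant C > 0 and N ∈ ℕ such that for all integers n ≥ N the Gram matrix G_{kn} is invertible and its inverse, the Weingarten matrix W_{kn} = G_{kn}⁻¹, satisfies |W_{kn}(π,σ)| ≤ C · n^{|π∨σ| − |π| − |σ|}. -/
open scoped Classical

variable {k : ℕ}

/-- span of differences of indicators of related elements -/
noncomputable def pairSpan (r : Setoid (Fin k)) : Submodule ℝ (Fin k → ℝ) :=
  Submodule.span ℝ {v | ∃ i j, r i j ∧ v = Pi.single i 1 - Pi.single j 1}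

open scoped Classical in
noncomputable def blockMap (r : Setoid (Fin k)) : (Fin k → ℝ) →ₗ[ℝ] (Quotient r → ℝ) where
  toFun x := fun q => ∑ i : Fin k, if Quotient.mk r i = q then x i else 0
  map_add' x y := by
    funext q
    simp only [Pi.add_apply]
    rw [← Finset.sum_add_distrib]
    refine Finset.sum_congr rfl fun i _ => ?_
    split <;> simp
  map_smul' c x := by
    funext q
    simp only [RingHom.id_apply, Pi.smul_apply, smul_eq_mul, Finset.mul_sum]
    show _ = ∑ i : Fin k, c * _
    refine Finset.sum_congr rfl fun i _ => ?_
    split <;> simp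

lemma blockMap_single (r : Setoid (Fin k)) (i : Fin k) :
    blockMap r (Pi.single i 1) = fun q => if Quotient.mk r i = q then (1:ℝ) else 0 := by
  funext q
  show (∑ m : Fin k, if Quotient.mk r m = q then (Pi.single i 1 : Fin k → ℝ) m else 0) = _
  rw [Finset.sum_eq_single i]
  · simp
  · intro m _ hm
    simp [Pi.single_apply, hm]
  · simp

lemma pairSpan_le_ker (r : Setoid (Fin k)) : pairSpan r ≤ LinearMap.ker (blockMap r) := by
  rw [pairSpan, Submodule.span_le]
  rintro v ⟨i, j, hij, rfl⟩
  rw [SetLike.mem_coe, LinearMap.mem_ker, map_sub, blockMap_single, blockMap_single]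
  have : Quotient.mk r i = Quotient.mk r j := Quotient.sound hij
  rw [this]
  simp

lemma ker_le_pairSpan (r : Setoid (Fin k)) : LinearMap.ker (blockMap r) ≤ pairSpan r := by
  intro x hx
  have hx' : ∀ q : Quotient r, (∑ i : Fin k, if Quotient.mk r i = q then x i else 0) = 0 :=
    fun q => congrFun (LinearMap.mem_ker.mp hx) q
  have hxe : x = ∑ i : Fin k,
      x i • (Pi.single i 1 - Pi.single (Quotient.out (Quotient.mk r i)) 1) := by
    funext j
    have h1 : (∑ i : Fin k,
        x i • ((Pi.single i 1 : Fin k → ℝ) - (Pi.single (Quotient.out (Quotient.mk r i)) 1 : Fin k → ℝ))) j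
        = ∑ i : Fin k, (x i * ((Pi.single i 1 : Fin k → ℝ) j)
            - x i * ((Pi.single (Quotient.out (Quotient.mk r i)) 1 : Fin k → ℝ) j)) := by
      rw [Finset.sum_apply]
      refine Finset.sum_congr rfl fun i _ => ?_
      simp [mul_sub]
    rw [h1, Finset.sum_sub_distrib]
    have h2 : (∑ i : Fin k, x i * ((Pi.single i 1 : Fin k → ℝ) j)) = x j := by
      rw [Finset.sum_eq_single j]
      · simp
      · intro m _ hm; simp [Pi.single_apply, hm]
      · simp
    have h3 : (∑ i : Fin k, x i * ((Pi.single (Quotient.out (Quotient.mk r i)) 1 : Fin k → ℝ) j)) = 0 := by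
      by_cases hj : Quotient.out (Quotient.mk r j) = j
      · have : ∀ i : Fin k, x i * ((Pi.single (Quotient.out (Quotient.mk r i)) 1 : Fin k → ℝ) j)
            = if Quotient.mk r i = Quotient.mk r j then x i else 0 := by
          intro i
          by_cases h : Quotient.mk r i = Quotient.mk r j
          · rw [if_pos h, h, hj]; simp
          · rw [if_neg h]
            have : Quotient.out (Quotient.mk r i) ≠ j := by
              intro he
              apply h
              rw [← Quotient.out_eq (Quotient.mk r i), he]
            simp [Pi.single_apply, this]
        rw [Finset.sum_congr rfl fun i _ => this i, hx']
      · refine Finset.sum_eq_zero fun i _ => ?_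
        have : Quotient.out (Quotient.mk r i) ≠ j := by
          intro he
          apply hj
          have : Quotient.mk r i = Quotient.mk r j := by
            rw [← Quotient.out_eq (Quotient.mk r i), he]
          rw [← this, he]
        simp [Pi.single_apply, this]
    rw [h2, h3, sub_zero]
  rw [hxe]
  refine Submodule.sum_mem _ fun i _ => Submodule.smul_mem _ _ (Submodule.subset_span ?_)
  exact ⟨i, Quotient.out (Quotient.mk r i),
    Quotient.exact (Quotient.out_eq (Quotient.mk r i)).symm, rfl⟩

lemma blockMap_surjective (r : Setoid (Fin k)) : Function.Surjective (blockMap r) := by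
  intro y
  refine ⟨fun i => if Quotient.out (Quotient.mk r i) = i then y (Quotient.mk r i) else 0, ?_⟩
  funext q
  show (∑ i : Fin k, if Quotient.mk r i = q then
      (if Quotient.out (Quotient.mk r i) = i then y (Quotient.mk r i) else 0) else 0) = y q
  rw [Finset.sum_eq_single (Quotient.out q)]
  · rw [if_pos (Quotient.out_eq q), Quotient.out_eq q, if_pos rfl]
  · intro m _ hm
    by_cases h1 : Quotient.mk r m = q
    · rw [if_pos h1]
      have : Quotient.out (Quotient.mk r m) ≠ m := by rw [h1]; exact fun h => hm h.symm
      rw [if_neg this]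
    · rw [if_neg h1]
  · simp

lemma pairSpan_eq_ker (r : Setoid (Fin k)) : pairSpan r = LinearMap.ker (blockMap r) :=
  le_antisymm (pairSpan_le_ker r) (ker_le_pairSpan r)

lemma finrank_pairSpan_add (r : Setoid (Fin k)) :
    Module.finrank ℝ (pairSpan r) + numBlocks r = k := by
  letI : Fintype (Quotient r) := Fintype.ofFinite _
  have h := LinearMap.finrank_range_add_finrank_ker (blockMap r)
  rw [LinearMap.range_eq_top.mpr (blockMap_surjective r)] at h
  rw [pairSpan_eq_ker]
  have h1 : Module.finrank ℝ (⊤ : Submodule ℝ (Quotient r → ℝ)) = numBlocks r := by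
    rw [finrank_top, Module.finrank_fintype_fun_eq_card, numBlocks, Nat.card_eq_fintype_card]
  have h2 : Module.finrank ℝ (Fin k → ℝ) = k := by
    rw [Module.finrank_fintype_fun_eq_card, Fintype.card_fin]
  omega

lemma pairSpan_mono {r s : Setoid (Fin k)} (h : r ≤ s) : pairSpan r ≤ pairSpan s := by
  rw [pairSpan, Submodule.span_le]
  rintro v ⟨i, j, hij, rfl⟩
  exact Submodule.subset_span ⟨i, j, Setoid.le_def.mp h hij, rfl⟩

lemma pairSpan_sup (r s : Setoid (Fin k)) : pairSpan (r ⊔ s) = pairSpan r ⊔ pairSpan s := by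
  refine le_antisymm ?_ (sup_le (pairSpan_mono le_sup_left) (pairSpan_mono le_sup_right))
  rw [pairSpan, Submodule.span_le]
  rintro v ⟨i, j, hij, rfl⟩
  rw [Setoid.sup_eq_eqvGen] at hij
  have hij' : Relation.EqvGen (fun x y => r x y ∨ s x y) i j := hij
  clear hij
  induction hij' with
  | rel i j h =>
      rcases h with h | h
      · exact SetLike.mem_coe.mpr (Submodule.mem_sup_left (Submodule.subset_span ⟨i, j, h, rfl⟩))
      · exact SetLike.mem_coe.mpr (Submodule.mem_sup_right (Submodule.subset_span ⟨i, j, h, rfl⟩))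
  | refl i => simp
  | symm i j h ih =>
      have : (Pi.single j 1 : Fin k → ℝ) - Pi.single i 1
          = -((Pi.single i 1 : Fin k → ℝ) - Pi.single j 1) := by ring
      rw [SetLike.mem_coe] at *
      rw [this]
      exact neg_mem ih
  | trans i j l h1 h2 ih1 ih2 =>
      have : (Pi.single i 1 : Fin k → ℝ) - Pi.single l 1
          = ((Pi.single i 1 : Fin k → ℝ) - Pi.single j 1)
            + ((Pi.single j 1 : Fin k → ℝ) - Pi.single l 1) := by ring
      rw [SetLike.mem_coe] at *
      rw [this]
      exact add_mem ih1 ih2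

lemma numBlocks_mono {r s : Setoid (Fin k)} (h : r ≤ s) : numBlocks s ≤ numBlocks r := by
  have h1 := finrank_pairSpan_add r
  have h2 := finrank_pairSpan_add s
  have h3 : Module.finrank ℝ (pairSpan r) ≤ Module.finrank ℝ (pairSpan s) :=
    Submodule.finrank_mono (pairSpan_mono h)
  omega

lemma numBlocks_le_k (r : Setoid (Fin k)) : numBlocks r ≤ k := by
  have := finrank_pairSpan_add r; omega

lemma setoid_eq_of_le_of_numBlocks {r s : Setoid (Fin k)} (h : r ≤ s)
    (hb : numBlocks r ≤ numBlocks s) : r = s := by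
  have h1 := finrank_pairSpan_add r
  have h2 := finrank_pairSpan_add s
  have h3 : Module.finrank ℝ (pairSpan r) = Module.finrank ℝ (pairSpan s) := by
    have := Submodule.finrank_mono (pairSpan_mono h); omega
  have hps : pairSpan r = pairSpan s := Submodule.eq_of_le_of_finrank_eq (pairSpan_mono h) h3
  refine le_antisymm h (Setoid.le_def.mpr ?_)
  intro i j hij
  have hv : (Pi.single i 1 : Fin k → ℝ) - Pi.single j 1 ∈ pairSpan r := by
    rw [hps]; exact Submodule.subset_span ⟨i, j, hij, rfl⟩
  have hk := pairSpan_le_ker r hv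
  rw [LinearMap.mem_ker, map_sub, blockMap_single, blockMap_single] at hk
  have := congrFun hk (Quotient.mk r i)
  simp only [Pi.sub_apply, Pi.zero_apply, if_pos rfl] at this
  by_cases hq : Quotient.mk r j = Quotient.mk r i
  · exact Quotient.exact hq.symm
  · rw [if_neg hq] at this; norm_num at this

lemma numBlocks_submodular (x y z : Setoid (Fin k)) :
    numBlocks (x ⊔ y) + numBlocks (y ⊔ z) ≤ numBlocks y + numBlocks (x ⊔ y ⊔ z) := by
  have hsup := Submodule.finrank_sup_add_finrank_inf_eq
    (pairSpan x ⊔ pairSpan y) (pairSpan y ⊔ pairSpan z)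
  have h1 := finrank_pairSpan_add (x ⊔ y)
  have h2 := finrank_pairSpan_add (y ⊔ z)
  have h3 := finrank_pairSpan_add y
  have h4 := finrank_pairSpan_add (x ⊔ y ⊔ z)
  rw [pairSpan_sup] at h1 h2
  have hAB : (pairSpan x ⊔ pairSpan y) ⊔ (pairSpan y ⊔ pairSpan z) = pairSpan (x ⊔ y ⊔ z) := by
    rw [pairSpan_sup, pairSpan_sup]
    rw [sup_assoc, ← sup_assoc (pairSpan y) (pairSpan y), sup_idem]
    ac_rfl
  rw [hAB] at hsup
  have hy : Module.finrank ℝ (pairSpan y)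
      ≤ Module.finrank ℝ ↥((pairSpan x ⊔ pairSpan y) ⊓ (pairSpan y ⊔ pairSpan z)) :=
    Submodule.finrank_mono (le_inf le_sup_right le_sup_left)
  omega

section Perm

variable {I : Type*} [Fintype I] [DecidableEq I]

lemma perm_key_aux (f : I → Setoid (Fin k)) :
    ∀ (m : ℕ) (τ : Equiv.Perm I), (Finset.univ.filter fun ρ => τ ρ ≠ ρ).card ≤ m → ∀ π : I,
    (∑ ρ : I, numBlocks (f (τ ρ) ⊔ f ρ)) + numBlocks (f π) + numBlocks (f (τ π))
      ≤ (∑ ρ : I, numBlocks (f ρ)) + 2 * numBlocks (f π ⊔ f (τ π)) := by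
  intro m
  induction m with
  | zero =>
    intro τ hc π
    have hfilter : (Finset.univ.filter fun ρ => τ ρ ≠ ρ) = ∅ :=
      Finset.card_eq_zero.mp (Nat.le_zero.mp hc)
    have hτ : ∀ ρ : I, τ ρ = ρ := by
      intro ρ
      by_contra h
      have : ρ ∈ (Finset.univ.filter fun ρ => τ ρ ≠ ρ) :=
        Finset.mem_filter.mpr ⟨Finset.mem_univ _, h⟩
      rw [hfilter] at this
      exact absurd this (Finset.notMem_empty _)
    simp only [hτ, sup_idem, two_mul]
    omega
  | succ m ih =>
    intro τ hc π
    by_cases hfix : τ π = π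
    · have hterm : ∀ ρ : I, numBlocks (f (τ ρ) ⊔ f ρ) ≤ numBlocks (f ρ) :=
        fun ρ => numBlocks_mono le_sup_right
      have hsum : (∑ ρ : I, numBlocks (f (τ ρ) ⊔ f ρ)) ≤ ∑ ρ : I, numBlocks (f ρ) :=
        Finset.sum_le_sum (fun ρ _ => hterm ρ)
      simp only [hfix, sup_idem, two_mul] at *
      omega
    · obtain ⟨σ, hσ⟩ : ∃ σ, τ π = σ := ⟨τ π, rfl⟩
      obtain ⟨π', hπ'⟩ : ∃ π', τ⁻¹ π = π' := ⟨τ⁻¹ π, rfl⟩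
      have hτπ' : τ π' = π := by rw [← hπ']; exact τ.apply_symm_apply π
      have hπ'π : π' ≠ π := by
        intro h; rw [h] at hτπ'; exact hfix hτπ'
      have hσπ : σ ≠ π := by rw [← hσ]; exact hfix
      set τ' : Equiv.Perm I := (Equiv.swap π σ) * τ with hτ'def
      have hτ'_apply : ∀ ρ, τ' ρ = Equiv.swap π σ (τ ρ) := fun ρ => rfl
      have hτ'π : τ' π = π := by rw [hτ'_apply, hσ, Equiv.swap_apply_right]
      have hτ'π' : τ' π' = σ := by rw [hτ'_apply, hτπ', Equiv.swap_apply_left]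
      have hrest : ∀ ρ, ρ ≠ π → ρ ≠ π' → τ' ρ = τ ρ := by
        intro ρ h1 h2
        rw [hτ'_apply, Equiv.swap_apply_of_ne_of_ne]
        · intro h
          apply h2
          apply τ.injective
          rw [h, hτπ']
        · intro h
          apply h1
          apply τ.injective
          rw [h, hσ]
      have hsupp : (Finset.univ.filter fun ρ => τ' ρ ≠ ρ)
          ⊆ (Finset.univ.filter fun ρ => τ ρ ≠ ρ).erase π := by
        intro ρ hρ
        rw [Finset.mem_filter] at hρ
        obtain ⟨-, hρ⟩ := hρ
        rw [Finset.mem_erase, Finset.mem_filter]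
        have hρπ : ρ ≠ π := by intro h; rw [h] at hρ; exact hρ hτ'π
        refine ⟨hρπ, Finset.mem_univ _, ?_⟩
        intro hfixρ
        have hρπ' : ρ ≠ π' := by
          intro h; rw [h] at hfixρ; rw [hfixρ] at hτπ'; exact hπ'π hτπ'
        exact hρ (by rw [hrest ρ hρπ hρπ', hfixρ])
      have hcard' : (Finset.univ.filter fun ρ => τ' ρ ≠ ρ).card ≤ m := by
        have hπmem : π ∈ (Finset.univ.filter fun ρ => τ ρ ≠ ρ) :=
          Finset.mem_filter.mpr ⟨Finset.mem_univ _, hfix⟩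
        have h1 := Finset.card_le_card hsupp
        rw [Finset.card_erase_of_mem hπmem] at h1
        omega
      have hIH := ih τ' hcard' π'
      rw [hτ'π'] at hIH
      -- sum decomposition
      have hsplit : ∀ g : I → ℕ, (∑ ρ : I, g ρ)
          = g π + g π' + ∑ ρ ∈ (Finset.univ.erase π).erase π', g ρ := by
        intro g
        rw [← Finset.add_sum_erase _ g (Finset.mem_univ π),
          ← Finset.add_sum_erase _ g (Finset.mem_erase.mpr ⟨hπ'π, Finset.mem_univ π'⟩)]
        omega
      have hRτ : ∑ ρ ∈ (Finset.univ.erase π).erase π', numBlocks (f (τ ρ) ⊔ f ρ)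
          = ∑ ρ ∈ (Finset.univ.erase π).erase π', numBlocks (f (τ' ρ) ⊔ f ρ) := by
        refine Finset.sum_congr rfl fun ρ hρ => ?_
        rw [Finset.mem_erase, Finset.mem_erase] at hρ
        rw [hrest ρ hρ.2.1 hρ.1]
      have e1 := hsplit (fun ρ => numBlocks (f (τ ρ) ⊔ f ρ))
      have e2 := hsplit (fun ρ => numBlocks (f (τ' ρ) ⊔ f ρ))
      have e3 := hsplit (fun ρ => numBlocks (f ρ))
      simp only [hσ, hτπ', hτ'π, hτ'π'] at e1 e2 hIH ⊢
      -- submodularity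
      have hsub : numBlocks (f π ⊔ f π') + numBlocks (f π' ⊔ f σ)
          ≤ numBlocks (f π') + numBlocks (f π ⊔ f π' ⊔ f σ) :=
        numBlocks_submodular (f π) (f π') (f σ)
      have hmono : numBlocks (f π ⊔ f π' ⊔ f σ) ≤ numBlocks (f π ⊔ f σ) := by
        apply numBlocks_mono
        rw [sup_assoc]
        exact sup_le le_sup_left (le_sup_right.trans (le_sup_right))
      have hc1 : numBlocks (f π ⊔ f π') = numBlocks (f π' ⊔ f π) := by rw [sup_comm]
      have hc2 : numBlocks (f σ ⊔ f π') = numBlocks (f π' ⊔ f σ) := by rw [sup_comm]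
      have hc3 : numBlocks (f σ ⊔ f π) = numBlocks (f π ⊔ f σ) := by rw [sup_comm]
      have hidem : numBlocks (f π ⊔ f π) = numBlocks (f π) := by rw [sup_idem]
      omega

end Perm

section MatrixPart

variable {I : Type*} [Fintype I] [DecidableEq I]

lemma sum_sup_add_one_le (f : I → Setoid (Fin k)) (hf : Function.Injective f)
    (τ : Equiv.Perm I) (hτ : τ ≠ 1) :
    (∑ ρ : I, numBlocks (f (τ ρ) ⊔ f ρ)) + 1 ≤ ∑ ρ : I, numBlocks (f ρ) := by
  have hterm : ∀ ρ : I, numBlocks (f (τ ρ) ⊔ f ρ) ≤ numBlocks (f ρ) :=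
    fun ρ => numBlocks_mono le_sup_right
  have hle : (∑ ρ : I, numBlocks (f (τ ρ) ⊔ f ρ)) ≤ ∑ ρ : I, numBlocks (f ρ) :=
    Finset.sum_le_sum fun ρ _ => hterm ρ
  by_contra hcon
  have heq : (∑ ρ : I, numBlocks (f (τ ρ) ⊔ f ρ)) = ∑ ρ : I, numBlocks (f ρ) := by omega
  have hterm_eq : ∀ ρ : I, numBlocks (f (τ ρ) ⊔ f ρ) = numBlocks (f ρ) := by
    by_contra hne
    push_neg at hne
    obtain ⟨ρ0, hρ0⟩ := hne
    have hlt : numBlocks (f (τ ρ0) ⊔ f ρ0) < numBlocks (f ρ0) :=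
      lt_of_le_of_ne (hterm ρ0) hρ0
    have := Finset.sum_lt_sum (fun ρ _ => hterm ρ) ⟨ρ0, Finset.mem_univ _, hlt⟩
    omega
  have hle1 : ∀ ρ : I, f (τ ρ) ≤ f ρ := by
    intro ρ
    have heq2 : f ρ = f (τ ρ) ⊔ f ρ :=
      setoid_eq_of_le_of_numBlocks le_sup_right (by rw [hterm_eq ρ])
    exact le_sup_left.trans heq2.ge
  have hmonoτ : ∀ ρ : I, f ρ ≤ f (τ ρ) := by
    intro ρ
    have hanti : Antitone (fun m => f ((τ ^ m) ρ)) := by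
      apply antitone_nat_of_succ_le
      intro m
      have : (τ ^ (m + 1)) ρ = τ ((τ ^ m) ρ) := by
        rw [pow_succ']; rfl
      rw [this]
      exact hle1 _
    have hN : τ ^ orderOf τ = 1 := pow_orderOf_eq_one τ
    have hN1 : 1 ≤ orderOf τ := orderOf_pos τ
    have h1 := hanti hN1
    simp only [pow_one, hN, Equiv.Perm.coe_one, id_eq] at h1
    exact h1
  have : ∀ ρ, τ ρ = ρ := fun ρ => hf (le_antisymm (hle1 ρ) (hmonoτ ρ))
  exact hτ (Equiv.ext this)

end MatrixPart

lemma abs_units_smul (u : ℤˣ) (x : ℝ) : |u • x| = |x| := by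
  rcases Int.units_eq_one_or u with h | h <;> simp [h, Units.smul_def]

lemma perm_key {I : Type*} [Fintype I] [DecidableEq I] (f : I → Setoid (Fin k))
    (τ : Equiv.Perm I) (π : I) :
    (∑ ρ : I, numBlocks (f (τ ρ) ⊔ f ρ)) + numBlocks (f π) + numBlocks (f (τ π))
      ≤ (∑ ρ : I, numBlocks (f ρ)) + 2 * numBlocks (f π ⊔ f (τ π)) :=
  perm_key_aux f _ τ le_rfl π

lemma gram_det_ge (D : Finset (Setoid (Fin k))) (n : ℕ)
    (hn : 2 * Nat.factorial (Fintype.card {x // x ∈ D}) ≤ n) :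
    (n:ℝ) ^ (∑ ρ : {x // x ∈ D}, numBlocks ρ.1) / 2 ≤ (gramMatrix D n).det := by
  classical
  set F := Nat.factorial (Fintype.card {x // x ∈ D}) with hF
  have hF1 : 1 ≤ F := Nat.factorial_pos _
  have hn2 : 2 ≤ n := by omega
  have hnR : (1:ℝ) ≤ (n:ℝ) := by exact_mod_cast Nat.one_le_of_lt hn2
  set S := ∑ ρ : {x // x ∈ D}, numBlocks ρ.1 with hS
  set c : Equiv.Perm {x // x ∈ D} → ℝ :=
    fun τ => Equiv.Perm.sign τ • ∏ ρ, gramMatrix D n (τ ρ) ρ with hc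
  have hdet : (gramMatrix D n).det = ∑ τ : Equiv.Perm {x // x ∈ D}, c τ := Matrix.det_apply _
  have hsplit : (∑ τ : Equiv.Perm {x // x ∈ D}, c τ)
      = c 1 + ∑ τ ∈ Finset.univ.erase 1, c τ :=
    (Finset.add_sum_erase _ c (Finset.mem_univ 1)).symm
  have hprod : ∀ τ : Equiv.Perm {x // x ∈ D}, (∏ ρ, gramMatrix D n (τ ρ) ρ)
      = (n:ℝ) ^ (∑ ρ : {x // x ∈ D}, numBlocks ((τ ρ).1 ⊔ ρ.1)) := by
    intro τ
    rw [← Finset.prod_pow_eq_pow_sum]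
    rfl
  have hc1 : c 1 = (n:ℝ) ^ S := by
    rw [hc]
    simp only [map_one, one_smul, Equiv.Perm.coe_one, id_eq]
    have h : ∀ ρ : {x // x ∈ D}, gramMatrix D n ρ ρ = (n:ℝ) ^ numBlocks ρ.1 := by
      intro ρ
      show (n:ℝ) ^ numBlocks (ρ.1 ⊔ ρ.1) = _
      rw [sup_idem]
    rw [Finset.prod_congr rfl fun ρ _ => h ρ, Finset.prod_pow_eq_pow_sum]
  have habs : ∀ τ : Equiv.Perm {x // x ∈ D},
      |c τ| = (n:ℝ) ^ (∑ ρ : {x // x ∈ D}, numBlocks ((τ ρ).1 ⊔ ρ.1)) := by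
    intro τ
    rw [hc, abs_units_smul, hprod τ, abs_of_nonneg (by positivity)]
  have hterm : ∀ τ ∈ Finset.univ.erase (1 : Equiv.Perm {x // x ∈ D}),
      |c τ| ≤ (n:ℝ) ^ S / (2 * F) := by
    intro τ hτ
    have hτ1 : τ ≠ 1 := (Finset.mem_erase.mp hτ).1
    have hkey := sum_sup_add_one_le (fun ρ : {x // x ∈ D} => ρ.1)
      Subtype.val_injective τ hτ1
    rw [habs τ, le_div_iff₀ (by positivity)]
    calc (n:ℝ) ^ (∑ ρ : {x // x ∈ D}, numBlocks ((τ ρ).1 ⊔ ρ.1)) * (2 * F)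
        ≤ (n:ℝ) ^ (∑ ρ : {x // x ∈ D}, numBlocks ((τ ρ).1 ⊔ ρ.1)) * n := by
          gcongr
          exact_mod_cast hn
      _ = (n:ℝ) ^ ((∑ ρ : {x // x ∈ D}, numBlocks ((τ ρ).1 ⊔ ρ.1)) + 1) := by
          rw [pow_succ]
      _ ≤ (n:ℝ) ^ S := pow_le_pow_right₀ hnR hkey
  have hsum : |∑ τ ∈ Finset.univ.erase (1 : Equiv.Perm {x // x ∈ D}), c τ|
      ≤ (n:ℝ) ^ S / 2 := by
    calc |∑ τ ∈ Finset.univ.erase (1 : Equiv.Perm {x // x ∈ D}), c τ|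
        ≤ ∑ τ ∈ Finset.univ.erase (1 : Equiv.Perm {x // x ∈ D}), |c τ| :=
          Finset.abs_sum_le_sum_abs _ _
      _ ≤ ∑ τ ∈ Finset.univ.erase (1 : Equiv.Perm {x // x ∈ D}), (n:ℝ) ^ S / (2 * F) :=
          Finset.sum_le_sum hterm
      _ = ((Finset.univ.erase (1 : Equiv.Perm {x // x ∈ D})).card : ℝ)
            * ((n:ℝ) ^ S / (2 * F)) := by rw [Finset.sum_const, nsmul_eq_mul]
      _ ≤ (F : ℝ) * ((n:ℝ) ^ S / (2 * F)) := by
          gcongr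
          have h1 : (Finset.univ.erase (1 : Equiv.Perm {x // x ∈ D})).card
                ≤ Fintype.card (Equiv.Perm {x // x ∈ D}) :=
              le_trans (Finset.card_erase_le) (le_of_eq (Finset.card_univ))
          rw [Fintype.card_perm] at h1
          exact_mod_cast h1
      _ = (n:ℝ) ^ S / 2 := by
          field_simp
  have hlow := (abs_le.mp hsum).1
  rw [hdet, hsplit, hc1]
  linarith

lemma gram_adj_bound (D : Finset (Setoid (Fin k))) (n : ℕ) (hn : 1 ≤ n)
    (π σ : {x // x ∈ D}) :
    |(gramMatrix D n).adjugate π σ| * (n:ℝ) ^ numBlocks π.1 * (n:ℝ) ^ numBlocks σ.1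
      ≤ (Nat.factorial (Fintype.card {x // x ∈ D})) *
        (n:ℝ) ^ ((∑ ρ : {x // x ∈ D}, numBlocks ρ.1) + numBlocks (π.1 ⊔ σ.1)) := by
  classical
  set S := ∑ ρ : {x // x ∈ D}, numBlocks ρ.1 with hS
  have hnR : (1:ℝ) ≤ (n:ℝ) := by exact_mod_cast hn
  set M := (gramMatrix D n).updateRow σ (Pi.single π 1) with hM
  rw [Matrix.adjugate_apply, Matrix.det_apply]
  have key : ∀ τ : Equiv.Perm {x // x ∈ D},
      |Equiv.Perm.sign τ • ∏ ρ, M (τ ρ) ρ| * (n:ℝ) ^ numBlocks π.1 * (n:ℝ) ^ numBlocks σ.1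
        ≤ (n:ℝ) ^ (S + numBlocks (π.1 ⊔ σ.1)) := by
    intro τ
    rw [abs_units_smul]
    by_cases hτπ : τ π = σ
    · have hprodsplit : (∏ ρ, M (τ ρ) ρ)
          = M (τ π) π * ∏ ρ ∈ Finset.univ.erase π, M (τ ρ) ρ :=
        (Finset.mul_prod_erase _ _ (Finset.mem_univ π)).symm
      have h1 : M (τ π) π = 1 := by
        rw [hτπ, hM, Matrix.updateRow_self, Pi.single_eq_same]
      have h2 : ∀ ρ ∈ Finset.univ.erase π, M (τ ρ) ρ
          = (n:ℝ) ^ numBlocks ((τ ρ).1 ⊔ ρ.1) := by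
        intro ρ hρ
        have hρπ : ρ ≠ π := (Finset.mem_erase.mp hρ).1
        have hτρ : τ ρ ≠ σ := by
          intro h
          exact hρπ (τ.injective (h.trans hτπ.symm))
        rw [hM, Matrix.updateRow_apply, if_neg hτρ]
        rfl
      have hprod2 : (∏ ρ ∈ Finset.univ.erase π, M (τ ρ) ρ)
          = (n:ℝ) ^ (∑ ρ ∈ Finset.univ.erase π, numBlocks ((τ ρ).1 ⊔ ρ.1)) := by
        rw [Finset.prod_congr rfl h2, Finset.prod_pow_eq_pow_sum]
      have hkey := perm_key (fun ρ : {x // x ∈ D} => ρ.1) τ π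
      have hsplitsum : (∑ ρ : {x // x ∈ D}, numBlocks ((τ ρ).1 ⊔ ρ.1))
          = numBlocks ((τ π).1 ⊔ π.1) + ∑ ρ ∈ Finset.univ.erase π, numBlocks ((τ ρ).1 ⊔ ρ.1) :=
        (Finset.add_sum_erase _ _ (Finset.mem_univ π)).symm
      have hcomm1 : numBlocks ((τ π).1 ⊔ π.1) = numBlocks (π.1 ⊔ σ.1) := by
        rw [hτπ, sup_comm]
      have hcomm2 : numBlocks (π.1 ⊔ (τ π).1) = numBlocks (π.1 ⊔ σ.1) := by rw [hτπ]
      have hτπb : numBlocks (τ π).1 = numBlocks σ.1 := by rw [hτπ]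
      have hexp : (∑ ρ ∈ Finset.univ.erase π, numBlocks ((τ ρ).1 ⊔ ρ.1))
          + numBlocks π.1 + numBlocks σ.1 ≤ S + numBlocks (π.1 ⊔ σ.1) := by
        omega
      rw [hprodsplit, h1, one_mul, hprod2, abs_of_nonneg (by positivity)]
      rw [← pow_add, ← pow_add]
      exact pow_le_pow_right₀ hnR hexp
    · have hzero : (∏ ρ, M (τ ρ) ρ) = 0 := by
        refine Finset.prod_eq_zero (Finset.mem_univ (τ⁻¹ σ)) ?_
        have h1 : τ (τ⁻¹ σ) = σ := τ.apply_symm_apply σ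
        have h2 : τ⁻¹ σ ≠ π := by
          intro h
          rw [h] at h1
          exact hτπ h1
        rw [h1, hM, Matrix.updateRow_self, Pi.single_eq_of_ne h2]
      rw [hzero]
      simp only [abs_zero, zero_mul]
      positivity
  calc |∑ τ : Equiv.Perm {x // x ∈ D}, Equiv.Perm.sign τ • ∏ ρ, M (τ ρ) ρ|
        * (n:ℝ) ^ numBlocks π.1 * (n:ℝ) ^ numBlocks σ.1
      ≤ (∑ τ : Equiv.Perm {x // x ∈ D}, |Equiv.Perm.sign τ • ∏ ρ, M (τ ρ) ρ|)
        * (n:ℝ) ^ numBlocks π.1 * (n:ℝ) ^ numBlocks σ.1 := by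
        gcongr
        exact Finset.abs_sum_le_sum_abs _ _
    _ = ∑ τ : Equiv.Perm {x // x ∈ D}, |Equiv.Perm.sign τ • ∏ ρ, M (τ ρ) ρ|
        * (n:ℝ) ^ numBlocks π.1 * (n:ℝ) ^ numBlocks σ.1 := by
        rw [Finset.sum_mul, Finset.sum_mul]
    _ ≤ ∑ _τ : Equiv.Perm {x // x ∈ D}, (n:ℝ) ^ (S + numBlocks (π.1 ⊔ σ.1)) :=
        Finset.sum_le_sum fun τ _ => key τ
    _ = (Fintype.card (Equiv.Perm {x // x ∈ D}) : ℝ)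
          * (n:ℝ) ^ (S + numBlocks (π.1 ⊔ σ.1)) := by
        rw [Finset.sum_const, nsmul_eq_mul, Finset.card_univ]
    _ ≤ (Nat.factorial (Fintype.card {x // x ∈ D}))
          * (n:ℝ) ^ (S + numBlocks (π.1 ⊔ σ.1)) := by
        rw [Fintype.card_perm]

open scoped Classical in
theorem weingarten_estimate {k : ℕ} (D : Finset (Setoid (Fin k))) (hD : D.Nonempty)
    (π σ : {x // x ∈ D}) :
    ∃ C : ℝ, 0 < C ∧ ∃ N : ℕ, ∀ n : ℕ, N ≤ n →
      IsUnit (gramMatrix D n) ∧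
      |(gramMatrix D n)⁻¹ π σ| ≤
        C * (n : ℝ) ^ ((numBlocks (π.1 ⊔ σ.1) : ℤ) - (numBlocks π.1 : ℤ) - (numBlocks σ.1 : ℤ)) := by
  classical
  set F := Nat.factorial (Fintype.card {x // x ∈ D}) with hF
  have hF1 : 1 ≤ F := Nat.factorial_pos _
  have hFR : (0:ℝ) < F := by exact_mod_cast hF1
  refine ⟨2 * F, by positivity, 2 * F, ?_⟩
  intro n hn
  have hn1 : 1 ≤ n := by omega
  have hnR1 : (1:ℝ) ≤ (n:ℝ) := by exact_mod_cast hn1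
  have hnR0 : (0:ℝ) < (n:ℝ) := lt_of_lt_of_le one_pos hnR1
  set S := ∑ ρ : {x // x ∈ D}, numBlocks ρ.1 with hS
  have hdet := gram_det_ge D n hn
  have hdetpos : 0 < (gramMatrix D n).det := lt_of_lt_of_le (by positivity) hdet
  have hunit : IsUnit (gramMatrix D n) :=
    (Matrix.isUnit_iff_isUnit_det _).mpr (isUnit_iff_ne_zero.mpr hdetpos.ne')
  refine ⟨hunit, ?_⟩
  have hadj := gram_adj_bound D n hn1 π σ
  rw [pow_add] at hadj
  have hWval : (gramMatrix D n)⁻¹ π σ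
      = ((gramMatrix D n).det)⁻¹ * (gramMatrix D n).adjugate π σ := by
    rw [Matrix.inv_def, Ring.inverse_eq_inv]
    rfl
  rw [hWval, abs_mul, abs_inv, abs_of_pos hdetpos]
  have hzpow : (n:ℝ) ^ ((numBlocks (π.1 ⊔ σ.1) : ℤ) - (numBlocks π.1 : ℤ) - (numBlocks σ.1 : ℤ))
      = (n:ℝ) ^ numBlocks (π.1 ⊔ σ.1) / ((n:ℝ) ^ numBlocks π.1 * (n:ℝ) ^ numBlocks σ.1) := by
    rw [zpow_sub₀ hnR0.ne', zpow_sub₀ hnR0.ne', zpow_natCast, zpow_natCast, zpow_natCast, div_div]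
  rw [hzpow]
  have hBC : (0:ℝ) < (n:ℝ) ^ numBlocks π.1 * (n:ℝ) ^ numBlocks σ.1 := by positivity
  rw [inv_mul_eq_div, mul_div_assoc' (2 * (F:ℝ)), div_le_div_iff₀ hdetpos hBC]
  have hadj' : |(gramMatrix D n).adjugate π σ| * ((n:ℝ) ^ numBlocks π.1 * (n:ℝ) ^ numBlocks σ.1)
      ≤ (F:ℝ) * ((n:ℝ) ^ S * (n:ℝ) ^ numBlocks (π.1 ⊔ σ.1)) := by
    rw [← mul_assoc]
    exact hadj
  have hA : (0:ℝ) ≤ (n:ℝ) ^ numBlocks (π.1 ⊔ σ.1) := by positivity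
  have hd2 : 2 * (F:ℝ) * (n:ℝ) ^ numBlocks (π.1 ⊔ σ.1) * ((n:ℝ) ^ S / 2)
      ≤ 2 * (F:ℝ) * (n:ℝ) ^ numBlocks (π.1 ⊔ σ.1) * (gramMatrix D n).det :=
    mul_le_mul_of_nonneg_left hdet (by positivity)
  linarith [hadj', hd2]
end

section
/- Fix k ∈ ℕ, a nonempty finite set D of partitions of {1,…,k}, and π, σ ∈ D with π ≤ σ. Then there exist a constant C > 0 and N ∈ ℕ such that for all integers n ≥ N the Gram matrix G_{kn} is invertible and the Weingarten matrix W_{kn} = G_{kn}⁻¹ satisfies |n^{|π|} · W_{kn}(π,σ) − μ_D(π,σ)| ≤ C/n, where μ_D is the Möbius function of the poset D equipped with the order induced from the refinement order on P(k). -/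
open Classical in
/-- The Möbius function of a finite poset:
`μ(p,p) = 1`, `μ(p,q) = -∑_{p ≤ r < q} μ(p,r)` for `p < q`, and `μ(p,q) = 0` otherwise. -/
noncomputable def moebius {Q : Type*} [PartialOrder Q] [Finite Q] (p q : Q) : ℤ :=
  if p = q then 1
  else if p < q then
    - ∑ r ∈ (Set.toFinite {r : Q | p ≤ r ∧ r < q}).toFinset.attach, moebius p (r : Q)
  else 0
termination_by {r : Q | r < q}.ncard
decreasing_by
  have hr := (Set.Finite.mem_toFinset _).mp r.2
  have h1 : {s : Q | s < (r : Q)} ⊆ {s : Q | s < q} := fun s hs => lt_trans hs hr.2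
  have h2 : {s : Q | s < (r : Q)} ⊂ {s : Q | s < q} :=
    (Set.ssubset_iff_of_subset h1).mpr ⟨r, hr.2, fun hrr => lt_irrefl _ hrr⟩
  exact Set.ncard_lt_ncard h2 (Set.toFinite _)

/-! ### Auxiliary lemmas -/

section NumBlocks

theorem numBlocks_le_aux {α : Type*} [Finite α] {r s : Setoid α} (h : r ≤ s) :
    numBlocks s ≤ numBlocks r := by
  have hsurj : Function.Surjective (Quotient.map' (id : α → α) (fun a b hab => h hab) :
      Quotient r → Quotient s) := by
    rintro ⟨a⟩
    exact ⟨Quotient.mk'' a, rfl⟩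
  exact Nat.card_le_card_of_surjective _ hsurj

theorem numBlocks_lt_aux {α : Type*} [Finite α] {r s : Setoid α} (h : r ≤ s) (hne : r ≠ s) :
    numBlocks s < numBlocks r := by
  rcases lt_or_eq_of_le (numBlocks_le_aux h) with h1 | h1
  · exact h1
  · exfalso
    apply hne
    set f : Quotient r → Quotient s := Quotient.map' (id : α → α) (fun a b hab => h hab) with hf
    have hsurj : Function.Surjective f := by rintro ⟨a⟩; exact ⟨Quotient.mk'' a, rfl⟩
    have hbij : Function.Bijective f :=
      (Nat.bijective_iff_surjective_and_card f).mpr ⟨hsurj, h1.symm⟩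
    refine le_antisymm h (fun a b hab => ?_)
    have : f (Quotient.mk'' a) = f (Quotient.mk'' b) := by
      simp only [hf, Quotient.map'_mk'', id_eq]
      exact Quotient.sound' hab
    exact Quotient.exact' (hbij.injective this)

end NumBlocks

section Moebius

variable {Q : Type*} [PartialOrder Q] [Finite Q]

theorem moebius_self_aux (p : Q) : moebius p p = 1 := by rw [moebius]; simp

theorem moebius_not_le_aux {p q : Q} (h : ¬ p ≤ q) : moebius p q = 0 := by
  rw [moebius]
  have h1 : p ≠ q := by rintro rfl; exact h le_rfl
  have h2 : ¬ p < q := fun hlt => h hlt.le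
  simp [h1, h2]

open Classical in
theorem moebius_rec_aux {p q : Q} (h : p < q) :
    moebius p q = - ∑ r ∈ (Set.toFinite {r : Q | p ≤ r ∧ r < q}).toFinset, moebius p r := by
  rw [moebius]
  rw [if_neg h.ne, if_pos h]
  rw [Finset.sum_attach ((Set.toFinite {r : Q | p ≤ r ∧ r < q}).toFinset) (fun r => moebius p r)]

open Classical in
theorem moebius_sum_aux [Fintype Q] (p q : Q) :
    ∑ r : Q, (if p ≤ r ∧ r ≤ q then moebius p r else 0)
      = if p = q then 1 else 0 := by
  rw [← Finset.sum_filter]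
  by_cases hpq : p = q
  · subst hpq
    rw [if_pos rfl]
    have : Finset.univ.filter (fun r => p ≤ r ∧ r ≤ p) = {p} := by
      ext r
      simp only [Finset.mem_filter, Finset.mem_univ, true_and, Finset.mem_singleton]
      constructor
      · rintro ⟨h1, h2⟩; exact le_antisymm h2 h1
      · rintro rfl; exact ⟨le_rfl, le_rfl⟩
    rw [this, Finset.sum_singleton, moebius_self_aux]
  · rw [if_neg hpq]
    by_cases hle : p ≤ q
    · have hlt : p < q := lt_of_le_of_ne hle hpq
      set S : Finset Q := Finset.univ.filter (fun r => p ≤ r ∧ r < q) with hS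
      have hq : q ∉ S := by simp [hS]
      have hins : Finset.univ.filter (fun r => p ≤ r ∧ r ≤ q) = insert q S := by
        ext r
        simp only [hS, Finset.mem_filter, Finset.mem_univ, true_and, Finset.mem_insert]
        constructor
        · rintro ⟨h1, h2⟩
          rcases lt_or_eq_of_le h2 with h3 | h3
          · exact Or.inr ⟨h1, h3⟩
          · exact Or.inl h3
        · rintro (rfl | ⟨h1, h2⟩)
          · exact ⟨hle, le_rfl⟩
          · exact ⟨h1, h2.le⟩
      have hSeq : (Set.toFinite {r : Q | p ≤ r ∧ r < q}).toFinset = S := by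
        ext r; simp [hS, Set.Finite.mem_toFinset]
      rw [hins, Finset.sum_insert hq, moebius_rec_aux hlt, hSeq, neg_add_cancel]
    · have : Finset.univ.filter (fun r => p ≤ r ∧ r ≤ q) = ∅ := by
        ext r
        simp only [Finset.mem_filter, Finset.mem_univ, true_and, Finset.notMem_empty,
          iff_false]
        rintro ⟨h1, h2⟩
        exact hle (h1.trans h2)
      simp [this]

open Classical in
theorem moebius_sum_real_aux [Fintype Q] (p q : Q) :
    ∑ r : Q, (if p ≤ r ∧ r ≤ q then ((moebius p r : ℤ) : ℝ) else 0)
      = if p = q then 1 else 0 := by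
  rw [show (if p = q then (1:ℝ) else 0) = ((if p = q then (1:ℤ) else 0 : ℤ) : ℝ) by
    split <;> simp]
  rw [← moebius_sum_aux p q, Int.cast_sum]
  exact Finset.sum_congr rfl fun r _ => by split <;> simp

open Classical in
theorem mu_zeta_eq_one (Q : Type*) [PartialOrder Q] [Fintype Q] :
    (Matrix.of fun p q : Q => ((moebius p q : ℤ) : ℝ)) *
      (Matrix.of fun p q : Q => if p ≤ q then (1:ℝ) else 0) = 1 := by
  ext p q
  rw [Matrix.mul_apply, Matrix.one_apply]
  rw [← moebius_sum_real_aux p q]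
  refine Finset.sum_congr rfl fun r _ => ?_
  simp only [Matrix.of_apply]
  by_cases h2 : r ≤ q
  · by_cases h3 : p ≤ r
    · simp [h2, h3]
    · simp [h2, h3, moebius_not_le_aux h3]
  · simp [h2, fun h : p ≤ r ∧ r ≤ q => h2 h.2]

end Moebius

section MatrixNorm

attribute [local instance] Matrix.linftyOpNormedRing Matrix.linftyOpNormedAlgebra

variable {ι : Type*} [Fintype ι] [DecidableEq ι]

theorem entry_abs_le_norm (A : Matrix ι ι ℝ) (i j : ι) : |A i j| ≤ ‖A‖ := by
  have h1 : ‖A i j‖₊ ≤ ‖A‖₊ := by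
    rw [Matrix.linfty_opNNNorm_def]
    exact le_trans
      (Finset.single_le_sum (f := fun j => ‖A i j‖₊) (fun _ _ => zero_le) (Finset.mem_univ j))
      (Finset.le_sup (f := fun i => ∑ j, ‖A i j‖₊) (Finset.mem_univ i))
  have := NNReal.coe_le_coe.mpr h1
  simpa [Real.norm_eq_abs] using this

theorem norm_le_card_mul_of_entries (A : Matrix ι ι ℝ) {ε : ℝ} (hε : 0 ≤ ε)
    (h : ∀ i j, |A i j| ≤ ε) : ‖A‖ ≤ (Fintype.card ι : ℝ) * ε := by
  lift ε to NNReal using hε with ε'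
  have h2 : ‖A‖₊ ≤ (Fintype.card ι : NNReal) * ε' := by
    rw [Matrix.linfty_opNNNorm_def]
    apply Finset.sup_le
    intro i _
    calc ∑ j, ‖A i j‖₊ ≤ ∑ _j : ι, ε' := by
          refine Finset.sum_le_sum fun j _ => ?_
          have := h i j
          rw [← Real.norm_eq_abs] at this
          exact_mod_cast this
      _ = (Fintype.card ι : NNReal) * ε' := by
          rw [Finset.sum_const, nsmul_eq_mul, Finset.card_univ]
  calc ‖A‖ = ((‖A‖₊ : NNReal) : ℝ) := (coe_nnnorm _).symm
    _ ≤ (((Fintype.card ι : NNReal) * ε' : NNReal) : ℝ) := NNReal.coe_le_coe.mpr h2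
    _ = (Fintype.card ι : ℝ) * ε' := by push_cast; ring

open scoped Classical in
theorem weingarten_moebius_estimate {k : ℕ} (D : Finset (Setoid (Fin k))) (hD : D.Nonempty)
    (π σ : {x // x ∈ D}) (hπσ : (π : Setoid (Fin k)) ≤ (σ : Setoid (Fin k))) :
    ∃ C : ℝ, 0 < C ∧ ∃ N : ℕ, ∀ n : ℕ, N ≤ n →
      IsUnit (gramMatrix D n) ∧
      |(n : ℝ) ^ numBlocks (π : Setoid (Fin k)) * (gramMatrix D n)⁻¹ π σ
          - (moebius π σ : ℝ)| ≤ C / n := by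
  classical
  haveI : Nonempty {x // x ∈ D} := ⟨π⟩
  haveI : CompleteSpace (Matrix {x // x ∈ D} {x // x ∈ D} ℝ) := FiniteDimensional.complete ℝ _
  -- the zeta and Möbius matrices
  set Zm : Matrix {x // x ∈ D} {x // x ∈ D} ℝ := Matrix.of fun p q : {x // x ∈ D} => if p ≤ q then (1:ℝ) else 0 with hZm
  set mu : Matrix {x // x ∈ D} {x // x ∈ D} ℝ := Matrix.of fun p q : {x // x ∈ D} => ((moebius p q : ℤ) : ℝ) with hmu
  have hmuZ : mu * Zm = 1 := by
    ext p q
    rw [Matrix.mul_apply, Matrix.one_apply]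
    have hsum : ∑ r, mu p r * Zm r q
        = ∑ r : {x // x ∈ D}, (if p ≤ r ∧ r ≤ q then ((moebius p r : ℤ) : ℝ) else 0) := by
      refine Finset.sum_congr rfl fun r _ => ?_
      simp only [hmu, hZm, Matrix.of_apply]
      by_cases h2 : r ≤ q
      · by_cases h3 : p ≤ r
        · simp [h2, h3]
        · simp [h2, h3, moebius_not_le_aux h3]
      · simp [h2, fun h : p ≤ r ∧ r ≤ q => h2 h.2]
    rw [hsum, moebius_sum_real_aux p q]
    by_cases h : p = q <;> simp [h]
  have hZmu : Zm * mu = 1 := mul_eq_one_comm.mpr hmuZ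
  set Zu : (Matrix {x // x ∈ D} {x // x ∈ D} ℝ)ˣ := ⟨Zm, mu, hZmu, hmuZ⟩ with hZu
  have hZuinv : (↑Zu⁻¹ : Matrix {x // x ∈ D} {x // x ∈ D} ℝ) = mu := rfl
  -- constants from the big-O estimate for Ring.inverse
  obtain ⟨C1, hC1, hbig⟩ := (NormedRing.inverse_add_norm_diff_first_order Zu).exists_pos
  rw [Asymptotics.isBigOWith_iff, Metric.eventually_nhds_iff] at hbig
  obtain ⟨ε, hε, hball⟩ := hbig
  have hmune : mu ≠ 0 := by
    intro h
    have := congrFun (congrFun h π) π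
    simp [hmu, moebius_self_aux] at this
  have hmupos : 0 < ‖mu‖ := norm_pos_iff.mpr hmune
  set c0 : ℝ := (Fintype.card {x // x ∈ D} : ℝ) with hc0
  have hc0pos : 0 < c0 := by
    rw [hc0]
    exact_mod_cast (Fintype.card_pos : 0 < Fintype.card {x // x ∈ D})
  set δ : ℝ := min ε (‖mu‖⁻¹ / 2) with hδ
  have hδpos : 0 < δ := lt_min hε (by positivity)
  refine ⟨C1 * c0, by positivity, ⌈c0 / δ⌉₊ + 1, fun n hn => ?_⟩
  have hn1 : 1 ≤ n := le_trans (Nat.le_add_left 1 _) hn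
  have hn0 : (0:ℝ) < n := by exact_mod_cast Nat.lt_of_lt_of_le Nat.zero_lt_one hn1
  have hn1' : (1:ℝ) ≤ n := by exact_mod_cast hn1
  -- c0 / n < δ
  have hcn : c0 / n < δ := by
    have h1 : c0 / δ < n := by
      calc c0 / δ ≤ (⌈c0 / δ⌉₊ : ℝ) := Nat.le_ceil _
        _ < (⌈c0 / δ⌉₊ : ℝ) + 1 := by linarith
        _ ≤ n := by exact_mod_cast hn
    rw [div_lt_iff₀ hδpos] at h1
    rw [div_lt_iff₀ hn0]
    linarith [h1]
  -- the matrices M and Λ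
  set v : {x // x ∈ D} → ℝ := fun τ => (n : ℝ) ^ numBlocks τ.1 with hv
  set Λ : Matrix {x // x ∈ D} {x // x ∈ D} ℝ := Matrix.diagonal v with hΛ
  set M : Matrix {x // x ∈ D} {x // x ∈ D} ℝ :=
    Matrix.of (fun p q : {x // x ∈ D} => (n : ℝ) ^ numBlocks (p.1 ⊔ q.1) * ((n : ℝ) ^ numBlocks q.1)⁻¹)
    with hM
  have hvne : ∀ τ : {x // x ∈ D}, v τ ≠ 0 := fun τ => pow_ne_zero _ (ne_of_gt hn0)
  have hGram : gramMatrix D n = M * Λ := by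
    ext p q
    rw [hM, hΛ, Matrix.mul_diagonal]
    simp only [Matrix.of_apply, gramMatrix, hv]
    rw [inv_mul_cancel_right₀ (hvne q)]
  -- entrywise bound on M - Zm
  have hent : ∀ p q : {x // x ∈ D}, |(M - Zm) p q| ≤ 1 / n := by
    intro p q
    rw [Matrix.sub_apply, hM, hZm]
    simp only [Matrix.of_apply]
    by_cases hpq : p ≤ q
    · have hsup : p.1 ⊔ q.1 = q.1 := sup_eq_right.mpr hpq
      rw [if_pos hpq, hsup, mul_inv_cancel₀ (pow_ne_zero _ (ne_of_gt hn0))]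
      simp only [sub_self, abs_zero]
      positivity
    · have hpq' : ¬ (p.1 ≤ q.1) := fun h => hpq h
      have hab : numBlocks (p.1 ⊔ q.1) + 1 ≤ numBlocks q.1 := by
        have := numBlocks_lt_aux (le_sup_right : q.1 ≤ p.1 ⊔ q.1)
          (fun h => hpq' (sup_eq_right.mp h.symm))
        omega
      rw [if_neg hpq, sub_zero, ← div_eq_mul_inv, abs_of_nonneg (by positivity)]
      rw [div_le_div_iff₀ (by positivity) hn0]
      calc (n:ℝ) ^ numBlocks (p.1 ⊔ q.1) * n = (n:ℝ) ^ (numBlocks (p.1 ⊔ q.1) + 1) := by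
            rw [pow_succ]
        _ ≤ (n:ℝ) ^ numBlocks q.1 := pow_le_pow_right₀ hn1' hab
        _ = 1 * (n:ℝ) ^ numBlocks q.1 := (one_mul _).symm
  have hnorm : ‖M - Zm‖ ≤ c0 / n := by
    have := norm_le_card_mul_of_entries (M - Zm) (by positivity : (0:ℝ) ≤ 1/n) hent
    calc ‖M - Zm‖ ≤ c0 * (1 / n) := this
      _ = c0 / n := by ring
  have htlt : ‖M - Zm‖ < δ := lt_of_le_of_lt hnorm hcn
  -- M is a unit
  have hMunit : IsUnit M := by
    have h : ‖M - (↑Zu : Matrix {x // x ∈ D} {x // x ∈ D} ℝ)‖ < ‖(↑Zu⁻¹ : Matrix {x // x ∈ D} {x // x ∈ D} ℝ)‖⁻¹ := by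
      rw [hZuinv]
      calc ‖M - (↑Zu : Matrix {x // x ∈ D} {x // x ∈ D} ℝ)‖ = ‖M - Zm‖ := rfl
        _ < δ := htlt
        _ ≤ ‖mu‖⁻¹ / 2 := min_le_right _ _
        _ < ‖mu‖⁻¹ := half_lt_self (by positivity)
    exact (Zu.ofNearby M h).isUnit
  have hΛunit : IsUnit Λ := by
    rw [hΛ, Matrix.isUnit_iff_isUnit_det, Matrix.det_diagonal]
    exact isUnit_iff_ne_zero.mpr (Finset.prod_ne_zero_iff.mpr fun τ _ => hvne τ)
  have hGunit : IsUnit (gramMatrix D n) := by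
    rw [hGram]; exact hMunit.mul hΛunit
  refine ⟨hGunit, ?_⟩
  -- compute the inverse entry
  have hΛinv : Λ⁻¹ = Matrix.diagonal (fun τ => (v τ)⁻¹) := by
    refine Matrix.inv_eq_right_inv ?_
    rw [hΛ, Matrix.diagonal_mul_diagonal,
      show (fun i => v i * (v i)⁻¹) = fun _ => (1:ℝ) from funext fun τ => mul_inv_cancel₀ (hvne τ),
      Matrix.diagonal_one]
  have hinv : (gramMatrix D n)⁻¹ = Matrix.diagonal (fun τ => (v τ)⁻¹) * M⁻¹ := by
    rw [hGram, Matrix.mul_inv_rev, hΛinv]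
  have hentry : (gramMatrix D n)⁻¹ π σ = (v π)⁻¹ * M⁻¹ π σ := by
    rw [hinv, Matrix.diagonal_mul]
  have hlhs : (n : ℝ) ^ numBlocks (π : Setoid (Fin k)) * (gramMatrix D n)⁻¹ π σ
      = M⁻¹ π σ := by
    rw [hentry, hv]
    field_simp
  rw [hlhs]
  -- the final bound
  have hMinv : M⁻¹ = Ring.inverse (Zm + (M - Zm)) := by
    rw [Matrix.nonsing_inv_eq_ringInverse]
    congr 1
    abel
  have hb := hball (y := M - Zm)
    (by rw [dist_zero_right]; exact lt_of_lt_of_le htlt (by rw [hδ]; exact min_le_left _ _))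
  rw [hZuinv] at hb
  have hb' : ‖Ring.inverse (Zm + (M - Zm)) - mu‖ ≤ C1 * ‖M - Zm‖ := by
    have : ((↑Zu : Matrix {x // x ∈ D} {x // x ∈ D} ℝ) + (M - Zm)) = Zm + (M - Zm) := rfl
    rw [this] at hb
    calc ‖Ring.inverse (Zm + (M - Zm)) - mu‖ ≤ C1 * ‖(‖M - Zm‖)‖ := hb
      _ = C1 * ‖M - Zm‖ := by rw [Real.norm_of_nonneg (norm_nonneg _)]
  have hfinal : |M⁻¹ π σ - mu π σ| ≤ C1 * (c0 / n) := by
    have h1 : |(M⁻¹ - mu) π σ| ≤ ‖M⁻¹ - mu‖ := entry_abs_le_norm _ _ _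
    rw [Matrix.sub_apply] at h1
    calc |M⁻¹ π σ - mu π σ| ≤ ‖M⁻¹ - mu‖ := h1
      _ = ‖Ring.inverse (Zm + (M - Zm)) - mu‖ := by rw [hMinv]
      _ ≤ C1 * ‖M - Zm‖ := hb'
      _ ≤ C1 * (c0 / n) := by
          exact mul_le_mul_of_nonneg_left hnorm (le_of_lt hC1)
  have hmueq : mu π σ = ((moebius π σ : ℤ) : ℝ) := rfl
  rw [← hmueq]
  calc |M⁻¹ π σ - mu π σ| ≤ C1 * (c0 / n) := hfinal
    _ = C1 * c0 / n := by ring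

end MatrixNorm
end

section
/- Let S be a finite set, let l ≥ 1, and let π, σ, ν₁, …, ν_l be partitions of S. Then |π∨ν₁| + |ν₁∨ν₂| + ⋯ + |ν_{l−1}∨ν_l| + |ν_l∨σ| ≤ |π∨σ| + |ν₁| + ⋯ + |ν_l|, where ∨ denotes the join in the refinement lattice of partitions of S and |·| denotes the number of blocks. -/
lemma numBlocks_anti {α : Type*} {r s : Setoid α} [Finite α] (h : r ≤ s) : numBlocks s ≤ numBlocks r := by
  have hf : Function.Surjective (Quotient.map' (s₁ := r) (s₂ := s) id
      (fun u v huv => Setoid.le_def.mp h huv)) := by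
    intro q
    obtain ⟨x, rfl⟩ := Quotient.exists_rep q
    exact ⟨Quotient.mk r x, rfl⟩
  exact Nat.card_le_card_of_surjective _ hf

section aux
variable {α : Type*}

/-- The setoid merging just `a` and `b`. -/
def pairS (a b : α) : Setoid α where
  r u v := u = v ∨ (u = a ∧ v = b) ∨ (u = b ∧ v = a)
  iseqv := by
    refine ⟨fun _ => Or.inl rfl, ?_, ?_⟩
    · rintro u v (h | ⟨h1, h2⟩ | ⟨h1, h2⟩) <;> subst_vars <;> tauto
    · rintro u v w (h | ⟨h1, h2⟩ | ⟨h1, h2⟩) (h' | ⟨h3, h4⟩ | ⟨h3, h4⟩) <;> subst_vars <;> tauto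

/-- The setoid describing `x ⊔ pairS a b`. -/
def supPairS (x : Setoid α) (a b : α) : Setoid α where
  r u v := x u v ∨ (x u a ∧ x b v) ∨ (x u b ∧ x a v)
  iseqv := by
    refine ⟨fun u => Or.inl (x.refl u), ?_, ?_⟩
    · rintro u v (h | ⟨h1, h2⟩ | ⟨h1, h2⟩)
      · exact Or.inl (x.symm h)
      · exact Or.inr (Or.inr ⟨x.symm h2, x.symm h1⟩)
      · exact Or.inr (Or.inl ⟨x.symm h2, x.symm h1⟩)
    · rintro u v w (h | ⟨h1, h2⟩ | ⟨h1, h2⟩) (h' | ⟨h3, h4⟩ | ⟨h3, h4⟩)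
      · exact Or.inl (x.trans h h')
      · exact Or.inr (Or.inl ⟨x.trans h h3, h4⟩)
      · exact Or.inr (Or.inr ⟨x.trans h h3, h4⟩)
      · exact Or.inr (Or.inl ⟨h1, x.trans h2 h'⟩)
      · exact Or.inl (x.trans (x.trans h1 (x.symm (x.trans h2 h3))) h4)
      · exact Or.inl (x.trans h1 h4)
      · exact Or.inr (Or.inr ⟨h1, x.trans h2 h'⟩)
      · exact Or.inl (x.trans h1 h4)
      · exact Or.inl (x.trans h1 (x.trans (x.symm (x.trans h2 h3)) h4))

lemma sup_pair_le (x : Setoid α) (a b : α) {u v : α} (h : (x ⊔ pairS a b) u v) :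
    x u v ∨ (x u a ∧ x b v) ∨ (x u b ∧ x a v) := by
  have hle : x ⊔ pairS a b ≤ supPairS x a b := by
    apply sup_le
    · exact Setoid.le_def.mpr fun {p q} hpq => Or.inl hpq
    · apply Setoid.le_def.mpr
      rintro p q (h' | ⟨h1, h2⟩ | ⟨h1, h2⟩)
      · subst h'; exact Or.inl (x.refl p)
      · subst h1; subst h2; exact Or.inr (Or.inl ⟨x.refl _, x.refl _⟩)
      · subst h1; subst h2; exact Or.inr (Or.inr ⟨x.refl _, x.refl _⟩)
  exact Setoid.le_def.mp hle h

lemma numBlocks_sup_pair (x : Setoid α) (a b : α) [Finite α] :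
    numBlocks x ≤ numBlocks (x ⊔ pairS a b) + 1 := by
  classical
  set P := x ⊔ pairS a b with hP
  let q : Quotient x → Quotient P :=
    Quotient.map' id (fun u v huv => Setoid.le_def.mp le_sup_left huv)
  have hq : ∀ u v : α, q (Quotient.mk x u) = q (Quotient.mk x v) → P u v := by
    intro u v h
    exact Quotient.eq''.mp h
  let F : Quotient x → Quotient P ⊕ Unit :=
    fun t => if t = Quotient.mk x b then Sum.inr () else Sum.inl (q t)
  have hF : Function.Injective F := by
    intro t1 t2 h
    obtain ⟨u, rfl⟩ := Quotient.exists_rep t1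
    obtain ⟨v, rfl⟩ := Quotient.exists_rep t2
    by_cases h1 : (Quotient.mk x u : Quotient x) = Quotient.mk x b <;>
      by_cases h2 : (Quotient.mk x v : Quotient x) = Quotient.mk x b <;>
      simp only [F, h1, h2, if_pos, if_neg, if_true, if_false] at h
    · rw [h1, h2]
    · simp at h
    · simp at h
    · have := hq u v (by simpa using h)
      rcases sup_pair_le x a b this with h' | ⟨ha, hb⟩ | ⟨ha, hb⟩
      · exact Quotient.sound h'
      · exact absurd (Quotient.sound (x.symm hb)) h2
      · exact absurd (Quotient.sound ha) h1
  calc numBlocks x ≤ Nat.card (Quotient P ⊕ Unit) := Nat.card_le_card_of_injective F hF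
    _ = numBlocks P + 1 := by rw [Nat.card_sum]; simp [numBlocks]
end aux
section aux2
variable {α : Type*}

/-- Splitting `y` along the `b`-class of `v`. -/
def splitS (b y : Setoid α) (v : α) : Setoid α where
  r p q := y p q ∧ (b p v ↔ b q v)
  iseqv := by
    refine ⟨fun p => ⟨y.refl p, Iff.rfl⟩, ?_, ?_⟩
    · rintro p q ⟨h1, h2⟩; exact ⟨y.symm h1, h2.symm⟩
    · rintro p q r ⟨h1, h2⟩ ⟨h3, h4⟩; exact ⟨y.trans h1 h3, h2.trans h4⟩

lemma b_le_splitS {b y : Setoid α} (hby : b ≤ y) (v : α) : b ≤ splitS b y v :=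
  Setoid.le_def.mpr fun {p q} hpq =>
    ⟨Setoid.le_def.mp hby hpq, ⟨fun h => b.trans (b.symm hpq) h, fun h => b.trans hpq h⟩⟩

lemma splitS_le {b y : Setoid α} (v : α) : splitS b y v ≤ y :=
  Setoid.le_def.mpr fun hpq => hpq.1

lemma split_card [Finite α] {b y : Setoid α} (hby : b ≤ y) {u v : α}
    (hyuv : y u v) (hbuv : ¬ b u v) :
    numBlocks y + 1 ≤ numBlocks (splitS b y v) := by
  classical
  set y' := splitS b y v with hy'
  have hresp : ∀ p q : α, y p q →
      (if y p v then Quotient.mk y' v else Quotient.mk y' p) =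
      (if y q v then Quotient.mk y' v else Quotient.mk y' q) := by
    intro p q hpq
    by_cases hp : y p v
    · have hq : y q v := y.trans (y.symm hpq) hp
      exact (if_pos hp).trans (if_pos hq).symm
    · have hqv : ¬ y q v := fun h => hp (y.trans hpq h)
      rw [if_neg hp, if_neg hqv]
      refine Quotient.sound ⟨hpq, ?_, ?_⟩
      · intro h; exact absurd (Setoid.le_def.mp (splitS_le v) (Setoid.le_def.mp (b_le_splitS hby v) h)) hp
      · intro h; exact absurd (Setoid.le_def.mp (splitS_le v) (Setoid.le_def.mp (b_le_splitS hby v) h)) hqv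
  let g : Quotient y → Quotient y' :=
    Quotient.lift (fun p => if y p v then Quotient.mk y' v else Quotient.mk y' p) hresp
  have hbu : ¬ b u v := hbuv
  have hgne : ∀ p : α, g (Quotient.mk y p) ≠ Quotient.mk y' u := by
    intro p h
    by_cases hp : y p v
    · rw [show g (Quotient.mk y p) = if y p v then Quotient.mk y' v else Quotient.mk y' p from rfl,
        if_pos hp] at h
      have : y' v u := Quotient.exact h
      exact hbuv (this.2.mp (b.refl v))
    · rw [show g (Quotient.mk y p) = if y p v then Quotient.mk y' v else Quotient.mk y' p from rfl,
        if_neg hp] at h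
      have : y' p u := Quotient.exact h
      exact hp (y.trans this.1 hyuv)
  have hginj : Function.Injective g := by
    intro t1 t2 h
    obtain ⟨p, rfl⟩ := Quotient.exists_rep t1
    obtain ⟨q, rfl⟩ := Quotient.exists_rep t2
    have hgp : g (Quotient.mk y p) = if y p v then Quotient.mk y' v else Quotient.mk y' p := rfl
    have hgq : g (Quotient.mk y q) = if y q v then Quotient.mk y' v else Quotient.mk y' q := rfl
    rw [hgp, hgq] at h
    by_cases hp : y p v <;> by_cases hq : y q v
    · exact Quotient.sound (y.trans hp (y.symm hq))
    · rw [if_pos hp, if_neg hq] at h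
      exact absurd (y.symm (Quotient.exact h).1) hq
    · rw [if_neg hp, if_pos hq] at h
      exact absurd ((Quotient.exact h).1) hp
    · rw [if_neg hp, if_neg hq] at h
      exact Quotient.sound (Quotient.exact h).1
  let F : Quotient y ⊕ Unit → Quotient y' := fun t => Sum.elim g (fun _ => Quotient.mk y' u) t
  have hF : Function.Injective F := by
    rintro (t1 | t1) (t2 | t2) h
    · exact congrArg Sum.inl (hginj h)
    · obtain ⟨p, rfl⟩ := Quotient.exists_rep t1
      exact absurd h (hgne p)
    · obtain ⟨p, rfl⟩ := Quotient.exists_rep t2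
      exact absurd h.symm (hgne p)
    · rfl
  calc numBlocks y + 1 = Nat.card (Quotient y ⊕ Unit) := by rw [Nat.card_sum]; simp [numBlocks]
    _ ≤ numBlocks y' := Nat.card_le_card_of_injective F hF

lemma split_sup {b y : Setoid α} (hby : b ≤ y) {u v : α}
    (hyuv : y u v) (hbuv : ¬ b u v) : splitS b y v ⊔ pairS u v = y := by
  set y' := splitS b y v with hy'
  set S := y' ⊔ pairS u v with hS
  apply le_antisymm
  · apply sup_le (splitS_le v)
    apply Setoid.le_def.mpr
    rintro p q (h | ⟨h1, h2⟩ | ⟨h1, h2⟩)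
    · subst h; exact y.refl p
    · subst h1; subst h2; exact hyuv
    · subst h1; subst h2; exact y.symm hyuv
  · apply Setoid.le_def.mpr
    intro p q hpq
    have hy'S : y' ≤ S := le_sup_left
    have hpS : pairS u v ≤ S := le_sup_right
    by_cases hp : b p v <;> by_cases hq : b q v
    · exact Setoid.le_def.mp hy'S ⟨hpq, iff_of_true hp hq⟩
    · -- p ~b v ~pair u ~ q
      have s1 : S p v := Setoid.le_def.mp hy'S (Setoid.le_def.mp (b_le_splitS hby v) hp)
      have s2 : S v u := Setoid.le_def.mp hpS (Or.inr (Or.inr ⟨rfl, rfl⟩))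
      have hypv : y p v := Setoid.le_def.mp hby hp
      have s3 : S u q := by
        refine Setoid.le_def.mp hy'S ⟨y.trans hyuv (y.trans (y.symm hypv) hpq), ?_⟩
        exact iff_of_false hbuv hq
      exact S.trans (S.trans s1 s2) s3
    · have hyqv : y q v := Setoid.le_def.mp hby hq
      have s1 : S q v := Setoid.le_def.mp hy'S (Setoid.le_def.mp (b_le_splitS hby v) hq)
      have s2 : S v u := Setoid.le_def.mp hpS (Or.inr (Or.inr ⟨rfl, rfl⟩))
      have s3 : S u p := by
        refine Setoid.le_def.mp hy'S ⟨y.trans hyuv (y.trans (y.symm hyqv) (y.symm hpq)), ?_⟩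
        exact iff_of_false hbuv hp
      exact S.symm (S.trans (S.trans s1 s2) s3)
    · exact Setoid.le_def.mp hy'S ⟨hpq, iff_of_false hp hq⟩
end aux2
section aux3
variable {α : Type*} [Finite α]

lemma key_ineq (b : Setoid α) :
    ∀ (k : ℕ) (y x : Setoid α), b ≤ y → b ≤ x →
      numBlocks b ≤ numBlocks y + k → numBlocks x ≤ numBlocks (x ⊔ y) + k := by
  intro k
  induction k with
  | zero =>
    intro y x hby hbx h
    by_cases hyx : y ≤ x
    · rw [sup_eq_left.mpr hyx]; omega
    · exfalso
      have hne : ¬ ∀ u v, y u v → x u v := fun h' => hyx (Setoid.le_def.mpr fun {u v} => h' u v)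
      push_neg at hne
      obtain ⟨u, v, h1, h2⟩ := hne
      have hbuv : ¬ b u v := fun hb => h2 (Setoid.le_def.mp hbx hb)
      have hs := split_card hby h1 hbuv
      have hm : numBlocks (splitS b y v) ≤ numBlocks b := numBlocks_anti (b_le_splitS hby v)
      omega
  | succ k ih =>
    intro y x hby hbx h
    by_cases hyx : y ≤ x
    · rw [sup_eq_left.mpr hyx]; omega
    · have hne : ¬ ∀ u v, y u v → x u v := fun h' => hyx (Setoid.le_def.mpr fun {u v} => h' u v)
      push_neg at hne
      obtain ⟨u, v, h1, h2⟩ := hne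
      have hbuv : ¬ b u v := fun hb => h2 (Setoid.le_def.mp hbx hb)
      have hs := split_card hby h1 hbuv
      have hpair := numBlocks_sup_pair x u v
      have hstep := ih (splitS b y v) (x ⊔ pairS u v) (b_le_splitS hby v)
        (le_trans hbx le_sup_left) (by omega)
      have heq : (x ⊔ pairS u v) ⊔ splitS b y v = x ⊔ y := by
        rw [sup_assoc, sup_comm (pairS u v), split_sup hby h1 hbuv]
      rw [heq] at hstep
      omega

lemma three_ineq (a b c : Setoid α) :
    numBlocks (a ⊔ b) + numBlocks (b ⊔ c) ≤ numBlocks (a ⊔ c) + numBlocks b := by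
  have h1 : numBlocks (b ⊔ c) ≤ numBlocks b := numBlocks_anti le_sup_left
  have h2 := key_ineq b (numBlocks b - numBlocks (b ⊔ c)) (b ⊔ c) (a ⊔ b)
    le_sup_left le_sup_right (by omega)
  have h3 : numBlocks ((a ⊔ b) ⊔ (b ⊔ c)) ≤ numBlocks (a ⊔ c) := by
    apply numBlocks_anti
    exact sup_le (le_trans le_sup_left le_sup_left) (le_trans le_sup_right le_sup_right)
  omega
end aux3
section chain
variable {α : Type*} [Finite α]

lemma chain_ineq : ∀ (m : ℕ) (d : Fin (m + 2) → Setoid α),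
    ∑ i : Fin (m + 1), numBlocks (d i.castSucc ⊔ d i.succ) ≤
      numBlocks (d 0 ⊔ d (Fin.last (m + 1))) + ∑ i : Fin m, numBlocks (d i.succ.castSucc) := by
  intro m
  induction m with
  | zero =>
    intro d
    simp [Fin.sum_univ_succ]
  | succ m ih =>
    intro d
    have hd := ih (fun j => d j.succ)
    rw [Fin.sum_univ_succ]
    have hterm : ∀ i : Fin (m + 1),
        numBlocks (d i.succ.castSucc ⊔ d i.succ.succ) =
        numBlocks ((fun j => d j.succ) i.castSucc ⊔ (fun j => d j.succ) i.succ) := by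
      intro i
      simp only []
      rw [Fin.succ_castSucc]
    calc numBlocks (d (0 : Fin (m+2)).castSucc ⊔ d (0 : Fin (m+2)).succ)
          + ∑ i : Fin (m + 1), numBlocks (d i.succ.castSucc ⊔ d i.succ.succ)
        ≤ numBlocks (d 0 ⊔ d 1)
          + (numBlocks (d 1 ⊔ d (Fin.last (m + 2)))
             + ∑ i : Fin m, numBlocks (d i.succ.castSucc.succ)) := by
          apply add_le_add
          · apply le_of_eq; congr 1
          · calc ∑ i : Fin (m + 1), numBlocks (d i.succ.castSucc ⊔ d i.succ.succ)
                = ∑ i : Fin (m + 1),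
                    numBlocks ((fun j => d j.succ) i.castSucc ⊔ (fun j => d j.succ) i.succ) := by
                  exact Finset.sum_congr rfl fun i _ => hterm i
              _ ≤ numBlocks ((fun j : Fin (m+2) => d j.succ) 0
                    ⊔ (fun j : Fin (m+2) => d j.succ) (Fin.last (m+1)))
                  + ∑ i : Fin m, numBlocks ((fun j : Fin (m+2) => d j.succ) i.succ.castSucc) := hd
              _ = _ := by
                  have e1 : ((0 : Fin (m+2)).succ) = (1 : Fin (m+3)) := by ext; simp
                  have e2 : ((Fin.last (m+1)).succ) = Fin.last (m+2) := Fin.succ_last _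
                  beta_reduce
                  rw [e1, e2]
      _ ≤ (numBlocks (d 0 ⊔ d (Fin.last (m + 2))) + numBlocks (d 1))
          + ∑ i : Fin m, numBlocks (d i.succ.castSucc.succ) := by
          have := three_ineq (d 0) (d 1) (d (Fin.last (m + 2)))
          omega
      _ = numBlocks (d 0 ⊔ d (Fin.last (m + 2)))
          + ∑ i : Fin (m + 1), numBlocks (d i.succ.castSucc) := by
          rw [Fin.sum_univ_succ]
          have h0 : d ((0 : Fin (m+1)).succ.castSucc) = d 1 := by congr 1
          rw [h0]
          have hsum : ∀ i : Fin m, numBlocks (d i.succ.castSucc.succ)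
              = numBlocks (d i.succ.succ.castSucc) := by
            intro i; rw [Fin.succ_castSucc]
          rw [Finset.sum_congr rfl fun i _ => hsum i]
          omega
end chain

theorem chain_join_inequality {S : Type*} [Fintype S] (l : ℕ) (hl : 1 ≤ l)
    (π σ : Setoid S) (ν : Fin l → Setoid S) :
    -- the chain `π, ν₁, …, ν_l, σ`
    (let c : Fin (l + 2) → Setoid S := Fin.cons π (Fin.snoc ν σ)
     ∑ i : Fin (l + 1), numBlocks (c i.castSucc ⊔ c i.succ))
      ≤ numBlocks (π ⊔ σ) + ∑ i : Fin l, numBlocks (ν i) := by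
  have main : ∀ c : Fin (l + 2) → Setoid S, c = Fin.cons π (Fin.snoc ν σ) →
      ∑ i : Fin (l + 1), numBlocks (c i.castSucc ⊔ c i.succ)
        ≤ numBlocks (π ⊔ σ) + ∑ i : Fin l, numBlocks (ν i) := by
    intro c hc
    have h := chain_ineq l c
    have hc0 : c 0 = π := by rw [hc]; exact Fin.cons_zero _ _
    have hclast : c (Fin.last (l + 1)) = σ := by
      have hlast : Fin.last (l + 1) = (Fin.last l).succ := by
        ext; simp
      rw [hc, hlast, Fin.cons_succ, Fin.snoc_last]
    have hcmid : ∀ i : Fin l, c i.succ.castSucc = ν i := by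
      intro i
      rw [← Fin.succ_castSucc, hc, Fin.cons_succ, Fin.snoc_castSucc]
    rw [hc0, hclast] at h
    refine le_trans h (le_of_eq ?_)
    congr 1
    exact Finset.sum_congr rfl fun i _ => by rw [hcmid i]
  exact main _ rfl
end

section
/- Fix k ∈ ℕ and let P_h(k) denote the set of partitions of {1,…,k} all of whose blocks have even cardinality, regarded as a poset with the order induced from the refinement order on P(k). Then for all π, σ ∈ P_h(k), μ_{P_h(k)}(π,σ) = μ_{P(k)}(π,σ). -/
instance setoidFinite {α : Type*} [Finite α] : Finite (Setoid α) :=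
  Finite.of_injective (fun s : Setoid α => s.r) (by
    intro a b h
    cases a; cases b
    simp only at h
    subst h
    rfl)

/-- The block of `v` in the partition `π`. -/
def block {α : Type*} (π : Setoid α) (v : α) : Set α := {w : α | π.r v w}

/-- A partition all of whose blocks have even cardinality. -/
def EvenBlocks {k : ℕ} (π : Setoid (Fin k)) : Prop :=
  ∀ v : Fin k, Even (block π v).ncard

theorem block_eq_iff {α : Type*} (π : Setoid α) {u w : α} :
    block π u = block π w ↔ π.r u w := by
  constructor
  · intro h
    have : w ∈ block π w := π.refl w
    rw [← h] at this
    exact this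
  · intro h
    ext x
    exact ⟨fun hx => π.trans (π.symm h) hx, fun hx => π.trans h hx⟩

theorem evenBlocks_of_le {k : ℕ} {π σ : Setoid (Fin k)} (hπ : EvenBlocks π)
    (h : π ≤ σ) : EvenBlocks σ := by
  classical
  intro v
  set s : Finset (Fin k) := (block σ v).toFinset with hs
  have hcard : (block σ v).ncard = s.card := by
    simp [hs, Set.ncard_eq_toFinset_card']
  rw [hcard, Finset.card_eq_sum_card_image (fun w => (block π w).toFinset) s]
  apply Finset.even_sum
  intro b hb
  obtain ⟨w, hw, rfl⟩ := Finset.mem_image.mp hb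
  have hws : σ.r v w := by rw [hs] at hw; exact Set.mem_toFinset.mp hw
  have hfib : {a ∈ s | (block π a).toFinset = (block π w).toFinset} = (block π w).toFinset := by
    ext u
    simp only [Finset.mem_filter, Set.mem_toFinset, hs]
    constructor
    · rintro ⟨_, hu⟩
      have : block π u = block π w := Set.toFinset_inj.mp hu
      exact π.symm ((block_eq_iff π).mp this)
    · intro hu
      exact ⟨σ.trans hws (Setoid.le_def.mp h hu),
        Set.toFinset_inj.mpr ((block_eq_iff π).mpr (π.symm hu))⟩
  rw [hfib]
  have := hπ w
  rwa [Set.ncard_eq_toFinset_card'] at this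

/-- `μ_{P_h(k)} = μ_{P(k)}` on partitions with even block sizes. -/
theorem moebius_evenBlocks_eq {k : ℕ}
    (π σ : {x : Setoid (Fin k) // EvenBlocks x}) :
    moebius π σ = moebius (π : Setoid (Fin k)) (σ : Setoid (Fin k)) := by
  induction σ using WellFoundedLT.induction with
  | ind σ ih =>
  rw [moebius, moebius]
  by_cases h1 : π = σ
  · have : (π : Setoid (Fin k)) = σ := congrArg _ h1
    rw [if_pos h1, if_pos this]
  · have h1' : (π : Setoid (Fin k)) ≠ (σ : Setoid (Fin k)) := fun h => h1 (Subtype.ext h)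
    rw [if_neg h1, if_neg h1']
    by_cases h2 : π < σ
    · have h2' : (π : Setoid (Fin k)) < (σ : Setoid (Fin k)) := h2
      rw [if_pos h2, if_pos h2']
      congr 1
      rw [Finset.sum_attach _ (fun r => moebius π r),
        Finset.sum_attach _ (fun r => moebius (π : Setoid (Fin k)) r)]
      refine Finset.sum_bij' (fun r _ => (r : Setoid (Fin k)))
        (fun r hr => ⟨r, ?_⟩) ?_ ?_ ?_ ?_ ?_
      · have hr' := (Set.Finite.mem_toFinset _).mp hr
        exact evenBlocks_of_le π.2 hr'.1
      · intro a ha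
        have ha' := (Set.Finite.mem_toFinset _).mp ha
        exact (Set.Finite.mem_toFinset _).mpr ⟨ha'.1, ha'.2⟩
      · intro a ha
        have ha' := (Set.Finite.mem_toFinset _).mp ha
        refine (Set.Finite.mem_toFinset _).mpr ⟨ha'.1, ha'.2⟩
      · intro a ha; rfl
      · intro a ha; rfl
      · intro a ha
        have ha' := (Set.Finite.mem_toFinset _).mp ha
        exact ih a ha'.2
    · have h2' : ¬ (π : Setoid (Fin k)) < (σ : Setoid (Fin k)) := h2
      rw [if_neg h2, if_neg h2']
end

section
/- Let A be a semigroup, I a set, and (x_i)_{i∈I} a family of elements of A such that x_a x_b x_c = x_c x_b x_a for all a, b, c ∈ I. Then for every n ≥ 1, all indices i₁,…,i_n ∈ I, and every parity-preserving permutation ω of {1,…,n}, one has x_{i₁} x_{i₂} ⋯ x_{i_n} = x_{i_{ω(1)}} x_{i_{ω(2)}} ⋯ x_{i_{ω(n)}}. -/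
/-- The ordered product `f 0 * f 1 * ⋯ * f n` of a nonempty family in a semigroup. -/
def finProd {A : Type*} [Mul A] : {n : ℕ} → (Fin (n + 1) → A) → A
  | 0, f => f 0
  | _ + 1, f => finProd (fun j => f j.castSucc) * f (Fin.last _)

lemma finProd_succ {A : Type*} [Mul A] {n : ℕ} (f : Fin (n + 2) → A) :
    finProd f = finProd (fun j => f j.castSucc) * f (Fin.last _) := rfl

lemma finProd_congr {A : Type*} [Mul A] {n : ℕ} {f g : Fin (n + 1) → A}
    (h : ∀ j, f j = g j) : finProd f = finProd g := by rw [funext h]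

lemma finProd_three {A : Type*} [Mul A] (f : Fin 3 → A) :
    finProd f = f 0 * f 1 * f 2 := rfl

lemma finProd_last3 {A : Type*} [Semigroup A] {n : ℕ} (f : Fin (n + 1 + 1 + 1 + 1) → A) :
    finProd f = finProd (fun k : Fin (n + 1) => f ⟨k, by omega⟩) *
      (f ⟨n + 1, by omega⟩ * f ⟨n + 2, by omega⟩ * f ⟨n + 3, by omega⟩) := by
  show (((finProd (fun k : Fin (n + 1) => f ⟨k, by omega⟩)) * f ⟨n + 1, by omega⟩) *
      f ⟨n + 2, by omega⟩) * f ⟨n + 3, by omega⟩ = _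
  simp [mul_assoc]

lemma swap_mk {n a b k : ℕ} (ha : a < n) (hb : b < n) (hk : k < n) :
    Equiv.swap (⟨a, ha⟩ : Fin n) ⟨b, hb⟩ ⟨k, hk⟩ =
      if k = a then ⟨b, hb⟩ else if k = b then ⟨a, ha⟩ else ⟨k, hk⟩ := by
  rcases eq_or_ne k a with rfl | hka
  · simp [Equiv.swap_apply_left]
  rcases eq_or_ne k b with rfl | hkb
  · simp [Equiv.swap_apply_right, hka]
  · rw [Equiv.swap_apply_of_ne_of_ne (by simp [Fin.ext_iff, hka]) (by simp [Fin.ext_iff, hkb]),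
      if_neg hka, if_neg hkb]

lemma swap_parity {n : ℕ} (a b k : Fin n) (hab : (a : ℕ) % 2 = (b : ℕ) % 2) :
    ((Equiv.swap a b k : Fin n) : ℕ) % 2 = (k : ℕ) % 2 := by
  rcases eq_or_ne k a with rfl | ha
  · rw [Equiv.swap_apply_left]; omega
  rcases eq_or_ne k b with rfl | hb
  · rw [Equiv.swap_apply_right]; omega
  · rw [Equiv.swap_apply_of_ne_of_ne ha hb]

/-- Restrict a permutation of `Fin (n+2)` fixing the last element to `Fin (n+1)`. -/
def shrinkPerm {n : ℕ} (ω : Equiv.Perm (Fin (n + 2)))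
    (h : ω (Fin.last (n + 1)) = Fin.last (n + 1)) : Equiv.Perm (Fin (n + 1)) where
  toFun j := (ω j.castSucc).castPred (by
    intro he
    have hj : j.castSucc = Fin.last (n + 1) := ω.injective (by rw [he, h])
    exact (Fin.castSucc_lt_last j).ne hj)
  invFun j := (ω.symm j.castSucc).castPred (by
    intro he
    have : j.castSucc = Fin.last (n + 1) := by
      have := congrArg ω he
      rwa [Equiv.apply_symm_apply, h] at this
    exact (Fin.castSucc_lt_last j).ne this)
  left_inv j := by
    apply Fin.castSucc_injective
    rw [Fin.castSucc_castPred, Fin.castSucc_castPred, Equiv.symm_apply_apply]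
  right_inv j := by
    apply Fin.castSucc_injective
    rw [Fin.castSucc_castPred, Fin.castSucc_castPred, Equiv.apply_symm_apply]

lemma shrinkPerm_spec {n : ℕ} (ω : Equiv.Perm (Fin (n + 2)))
    (h : ω (Fin.last (n + 1)) = Fin.last (n + 1)) (j : Fin (n + 1)) :
    (shrinkPerm ω h j).castSucc = ω j.castSucc := by
  simp [shrinkPerm, Fin.castSucc_castPred]

section
variable {A : Type*} [Semigroup A] {I : Type*} (x : I → A)
    (hx : ∀ a b c : I, x a * x b * x c = x c * x b * x a)

include hx in
lemma boundary3 (i : Fin 3 → I) :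
    finProd (fun k => x (i k)) =
      finProd (fun k => x (i (Equiv.swap (⟨0, by omega⟩ : Fin 3) ⟨0 + 2, by omega⟩ k))) := by
  rw [finProd_three, finProd_three]
  have s0 : Equiv.swap (⟨0, by omega⟩ : Fin 3) ⟨0 + 2, by omega⟩ 0 = 2 := by decide
  have s1 : Equiv.swap (⟨0, by omega⟩ : Fin 3) ⟨0 + 2, by omega⟩ 1 = 1 := by decide
  have s2 : Equiv.swap (⟨0, by omega⟩ : Fin 3) ⟨0 + 2, by omega⟩ 2 = 0 := by decide
  rw [s0, s1, s2]
  exact hx _ _ _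

include hx in
lemma boundaryN (m : ℕ) (i : Fin (m + 1 + 1 + 1 + 1) → I) :
    finProd (fun k => x (i k)) =
      finProd (fun k => x (i (Equiv.swap (⟨m + 1, by omega⟩ : Fin (m + 1 + 1 + 1 + 1))
        ⟨m + 1 + 2, by omega⟩ k))) := by
  have b1 : m + 1 < m + 1 + 1 + 1 + 1 := by omega
  have b2 : m + 1 + 2 < m + 1 + 1 + 1 + 1 := by omega
  have b3 : m + 2 < m + 1 + 1 + 1 + 1 := by omega
  have b4 : m + 3 < m + 1 + 1 + 1 + 1 := by omega
  have c1 : m + 2 ≠ m + 1 := by omega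
  have c2 : m + 2 ≠ m + 1 + 2 := by omega
  have c3 : m + 3 ≠ m + 1 := by omega
  have c4 : m + 3 = m + 1 + 2 := by omega
  have c5 : ∀ k : ℕ, k < m + 1 → k ≠ m + 1 := by omega
  have c6 : ∀ k : ℕ, k < m + 1 → k ≠ m + 1 + 2 := by omega
  have bk : ∀ k : Fin (m + 1), (k : ℕ) < m + 1 + 1 + 1 + 1 := fun k => by omega
  have h31 : (⟨m + 3, b4⟩ : Fin (m + 1 + 1 + 1 + 1)) = ⟨m + 1 + 2, b2⟩ := Fin.ext c4
  have s1 : Equiv.swap (⟨m + 1, b1⟩ : Fin (m + 1 + 1 + 1 + 1)) ⟨m + 1 + 2, b2⟩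
      ⟨m + 1, b1⟩ = ⟨m + 1 + 2, b2⟩ := by
    rw [swap_mk, if_pos rfl]
  have s2 : Equiv.swap (⟨m + 1, b1⟩ : Fin (m + 1 + 1 + 1 + 1)) ⟨m + 1 + 2, b2⟩
      ⟨m + 2, b3⟩ = ⟨m + 2, b3⟩ := by
    rw [swap_mk, if_neg c1, if_neg c2]
  have s3 : Equiv.swap (⟨m + 1, b1⟩ : Fin (m + 1 + 1 + 1 + 1)) ⟨m + 1 + 2, b2⟩
      ⟨m + 3, b4⟩ = ⟨m + 1, b1⟩ := by
    rw [swap_mk, if_neg c3, if_pos c4]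
  have spre : ∀ k : Fin (m + 1),
      Equiv.swap (⟨m + 1, b1⟩ : Fin (m + 1 + 1 + 1 + 1)) ⟨m + 1 + 2, b2⟩
        ⟨(k : ℕ), bk k⟩ = ⟨(k : ℕ), bk k⟩ := fun k => by
    rw [swap_mk, if_neg (c5 k k.isLt), if_neg (c6 k k.isLt)]
  have e1 : finProd (fun k : Fin (m + 1) => x (i ⟨(k : ℕ), bk k⟩)) =
      finProd (fun k : Fin (m + 1) =>
        x (i (Equiv.swap (⟨m + 1, b1⟩ : Fin (m + 1 + 1 + 1 + 1)) ⟨m + 1 + 2, b2⟩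
          ⟨(k : ℕ), bk k⟩))) :=
    finProd_congr (fun k => by rw [spre k])
  rw [finProd_last3, finProd_last3]
  rw [← e1, s1, s2, s3, h31]
  congr 1
  exact hx _ _ _

include hx in
lemma swap_lemma : ∀ (n : ℕ) (i : Fin (n + 1) → I) (j : ℕ) (h2 : j + 2 ≤ n),
    finProd (fun k => x (i k)) =
      finProd (fun k =>
        x (i (Equiv.swap (⟨j, by omega⟩ : Fin (n + 1)) ⟨j + 2, by omega⟩ k))) := by
  intro n
  induction n with
  | zero => intro i j h2; omega
  | succ n IH =>
    intro i j h2
    rcases Nat.lt_or_ge (j + 2) (n + 1) with hlt | hge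
    · -- interior case: swap lives in the prefix
      have h2' : j + 2 ≤ n := by omega
      rw [finProd_succ, finProd_succ]
      have hlast : Equiv.swap (⟨j, by omega⟩ : Fin (n + 2)) ⟨j + 2, by omega⟩
          (Fin.last (n + 1)) = Fin.last (n + 1) := by
        apply Equiv.swap_apply_of_ne_of_ne <;>
          · intro h; have := congrArg Fin.val h; simp [Fin.last] at this; omega
      have key : ∀ k : Fin (n + 1),
          Equiv.swap (⟨j, by omega⟩ : Fin (n + 2)) ⟨j + 2, by omega⟩ k.castSucc =
            (Equiv.swap (⟨j, by omega⟩ : Fin (n + 1)) ⟨j + 2, by omega⟩ k).castSucc := by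
        intro k
        exact (Fin.castSucc_injective (n + 1)).swap_apply
          (⟨j, by omega⟩ : Fin (n + 1)) ⟨j + 2, by omega⟩ k
      rw [hlast]
      congr 1
      calc finProd (fun k : Fin (n + 1) => x (i k.castSucc))
          = finProd (fun k : Fin (n + 1) =>
              x (i ((Equiv.swap (⟨j, by omega⟩ : Fin (n + 1)) ⟨j + 2, by omega⟩ k).castSucc))) :=
            IH (fun t => i t.castSucc) j h2'
        _ = _ := finProd_congr (fun k => by rw [← key k])
    · -- boundary case: j + 2 = n + 1
      have hj : j + 2 = n + 1 := le_antisymm h2 hge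
      have hn : n = j + 1 := by omega
      subst hn
      rcases j with _ | m
      · exact boundary3 x hx i
      · exact boundaryN x hx m i

lemma fixed_case (n : ℕ)
    (IH : ∀ (i : Fin (n + 1) → I) (ω : Equiv.Perm (Fin (n + 1))),
      (∀ j : Fin (n + 1), ((ω j : ℕ)) % 2 = (j : ℕ) % 2) →
      finProd (fun j => x (i j)) = finProd (fun j => x (i (ω j))))
    (i : Fin (n + 2) → I) (ω : Equiv.Perm (Fin (n + 2)))
    (hω : ∀ j : Fin (n + 2), ((ω j : ℕ)) % 2 = (j : ℕ) % 2)
    (hfix : ω (Fin.last (n + 1)) = Fin.last (n + 1)) :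
    finProd (fun j => x (i j)) = finProd (fun j => x (i (ω j))) := by
  rw [finProd_succ (fun j => x (i j)), finProd_succ (fun j => x (i (ω j)))]
  rw [hfix]
  congr 1
  have hω₀ : ∀ j : Fin (n + 1), ((shrinkPerm ω hfix j : ℕ)) % 2 = (j : ℕ) % 2 := by
    intro j
    have h1 := congrArg Fin.val (shrinkPerm_spec ω hfix j)
    simp only [Fin.coe_castSucc] at h1
    rw [h1]
    have h2 := hω j.castSucc
    simpa using h2
  have h0 := IH (fun t => i t.castSucc) (shrinkPerm ω hfix) hω₀
  rw [h0]
  exact finProd_congr (fun k => by rw [← shrinkPerm_spec ω hfix k])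

include hx in
lemma aux_parity : ∀ (n : ℕ) (i : Fin (n + 1) → I) (ω : Equiv.Perm (Fin (n + 1))),
    (∀ j : Fin (n + 1), ((ω j : ℕ)) % 2 = (j : ℕ) % 2) →
    finProd (fun j => x (i j)) = finProd (fun j => x (i (ω j))) := by
  intro n
  induction n with
  | zero =>
    intro i ω hω
    have h0 : ω 0 = 0 := Fin.ext (by omega)
    show x (i 0) = x (i (ω 0))
    rw [h0]
  | succ n IH =>
    suffices H : ∀ (m : ℕ) (i : Fin (n + 2) → I) (ω : Equiv.Perm (Fin (n + 2))),
        (∀ j : Fin (n + 2), ((ω j : ℕ)) % 2 = (j : ℕ) % 2) →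
        n + 1 - (ω (Fin.last (n + 1)) : ℕ) ≤ m →
        finProd (fun j => x (i j)) = finProd (fun j => x (i (ω j))) by
      intro i ω hω
      exact H _ i ω hω le_rfl
    intro m
    induction m with
    | zero =>
      intro i ω hω hm
      have hfix : ω (Fin.last (n + 1)) = Fin.last (n + 1) := by
        have h1 : ((ω (Fin.last (n + 1)) : ℕ)) < n + 2 := (ω _).isLt
        exact Fin.ext (by simp only [Fin.val_last]; omega)
      exact fixed_case x n IH i ω hω hfix
    | succ m IHm =>
      intro i ω hω hm
      by_cases hfix : ω (Fin.last (n + 1)) = Fin.last (n + 1)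
      · exact fixed_case x n IH i ω hω hfix
      · have hk : (ω (Fin.last (n + 1)) : ℕ) % 2 = (n + 1) % 2 := by
          simpa using hω (Fin.last (n + 1))
        have hklt : (ω (Fin.last (n + 1)) : ℕ) < n + 1 := by
          have h1 : (ω (Fin.last (n + 1)) : ℕ) < n + 2 := (ω _).isLt
          have h2 : (ω (Fin.last (n + 1)) : ℕ) ≠ n + 1 := fun h => hfix (Fin.ext (by simpa using h))
          omega
        have hk2 : (ω (Fin.last (n + 1)) : ℕ) + 2 ≤ n + 1 := by omega
        have bk1 : (ω (Fin.last (n + 1)) : ℕ) < n + 2 := by omega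
        have bk2 : (ω (Fin.last (n + 1)) : ℕ) + 2 < n + 2 := by omega
        have harith : n + 1 - ((ω (Fin.last (n + 1)) : ℕ) + 2) ≤ m := by omega
        have hpar : ((⟨(ω (Fin.last (n + 1)) : ℕ), bk1⟩ : Fin (n + 2)) : ℕ) % 2 =
            ((⟨(ω (Fin.last (n + 1)) : ℕ) + 2, bk2⟩ : Fin (n + 2)) : ℕ) % 2 := by
          simp only [Fin.val_mk]
          omega
        have hω' : ∀ j : Fin (n + 2),
            (((ω.trans (Equiv.swap (⟨(ω (Fin.last (n + 1)) : ℕ), bk1⟩ : Fin (n + 2))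
              ⟨(ω (Fin.last (n + 1)) : ℕ) + 2, bk2⟩)) j : ℕ)) % 2 = (j : ℕ) % 2 := by
          intro j
          have h1 := swap_parity (⟨(ω (Fin.last (n + 1)) : ℕ), bk1⟩ : Fin (n + 2))
            ⟨(ω (Fin.last (n + 1)) : ℕ) + 2, bk2⟩ (ω j) hpar
          rw [Equiv.trans_apply, h1]
          exact hω j
        have hmeas : n + 1 -
            (((ω.trans (Equiv.swap (⟨(ω (Fin.last (n + 1)) : ℕ), bk1⟩ : Fin (n + 2))
              ⟨(ω (Fin.last (n + 1)) : ℕ) + 2, bk2⟩)) (Fin.last (n + 1)) : ℕ)) ≤ m := by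
          have h1 : (ω.trans (Equiv.swap (⟨(ω (Fin.last (n + 1)) : ℕ), bk1⟩ : Fin (n + 2))
              ⟨(ω (Fin.last (n + 1)) : ℕ) + 2, bk2⟩)) (Fin.last (n + 1)) =
              ⟨(ω (Fin.last (n + 1)) : ℕ) + 2, bk2⟩ := by
            rw [Equiv.trans_apply]
            exact Equiv.swap_apply_left _ _
          rw [h1]
          exact harith
        have step := IHm (fun t => i (Equiv.swap (⟨(ω (Fin.last (n + 1)) : ℕ), bk1⟩ : Fin (n + 2))
            ⟨(ω (Fin.last (n + 1)) : ℕ) + 2, bk2⟩ t))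
          (ω.trans (Equiv.swap (⟨(ω (Fin.last (n + 1)) : ℕ), bk1⟩ : Fin (n + 2))
            ⟨(ω (Fin.last (n + 1)) : ℕ) + 2, bk2⟩)) hω' hmeas
        have e2 := swap_lemma x hx (n + 1) i (ω (Fin.last (n + 1)) : ℕ) hk2
        refine e2.trans ?_
        refine Eq.trans ?_ (step.trans (finProd_congr (fun j => by
          simp only [Equiv.trans_apply, Equiv.swap_apply_self])))
        exact finProd_congr (fun t => rfl)

end

/-- A half-commuting family is invariant under parity preserving permutations of the
factors of a product. -/
theorem halfCommute_parity_invariant {A : Type*} [Semigroup A] {I : Type*} (x : I → A)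
    (hx : ∀ a b c : I, x a * x b * x c = x c * x b * x a)
    (n : ℕ) (i : Fin (n + 1) → I) (ω : Equiv.Perm (Fin (n + 1)))
    (hω : ∀ j : Fin (n + 1), ((ω j : ℕ)) % 2 = (j : ℕ) % 2) :
    finProd (fun j => x (i j)) = finProd (fun j => x (i (ω j))) := by
  exact aux_parity x hx n i ω hω
end

section
/- Let (A, φ) and (A′, φ′) be noncommutative probability spaces, and let (x_i)_{i∈I} be a half-commuting family in A that is half-independent with respect to φ, and (y_i)_{i∈I} a half-commuting family in A′ that is half-independent with respect to φ′. If φ(x_iⁿ) = φ′(y_iⁿ) for every i ∈ I and every n ≥ 1, then φ(x_{i₁} ⋯ x_{i_k}) = φ′(y_{i₁} ⋯ y_{i_k}) for every k ≥ 1 and all i₁,…,i_k ∈ I. -/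
/-- A balanced partition: each block contains as many odd as even elements of `{1,…,k}`
(position `t : Fin k` corresponds to the number `t+1 ∈ {1,…,k}`). -/
def BalancedPartition {k : ℕ} (π : Setoid (Fin k)) : Prop :=
  ∀ v : Fin k,
    (block π v ∩ {w : Fin k | (w : ℕ) % 2 = 0}).ncard =
    (block π v ∩ {w : Fin k | (w : ℕ) % 2 = 1}).ncard

/-- A family `(x_i)` is half-independent with respect to the state `φ` if
(a) the squares `x_i²` are independent: `φ(x_{j₁}^{2k₁} ⋯ x_{j_m}^{2k_m})` factors for
distinct `j₁,…,j_m` and `k₁,…,k_m ≥ 1`, and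
(b) `φ(x_{i₁} ⋯ x_{i_k}) = 0` whenever `ker i` is not balanced. -/
def HalfIndependent {A : Type*} [Ring A] {I : Type*} (φ : A → ℂ) (x : I → A) : Prop :=
  (∀ (m : ℕ) (j : Fin m → I), Function.Injective j → ∀ e : Fin m → ℕ, (∀ r, 1 ≤ e r) →
      φ (List.ofFn (fun r => x (j r) ^ (2 * e r))).prod = ∏ r, φ (x (j r) ^ (2 * e r))) ∧
  (∀ (k : ℕ) (i : Fin k → I), ¬ BalancedPartition (Setoid.ker i) →
      φ (List.ofFn (fun t => x (i t))).prod = 0)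


section HalfIndepAux

variable {I : Type*} {A : Type*} [Ring A]

/-- interleaved pair product -/
def pairW (x : I → A) (a b : List I) : A := (List.zipWith (fun p q => x p * x q) a b).prod

lemma swapB {x : I → A} (hxc : ∀ a b c : I, x a * x b * x c = x c * x b * x a)
    (p q r s : I) : (x p * x q) * (x r * x s) = (x r * x q) * (x p * x s) := by
  rw [← mul_assoc, ← mul_assoc, hxc]

lemma swapC {x : I → A} (hxc : ∀ a b c : I, x a * x b * x c = x c * x b * x a)
    (p q r s : I) : (x p * x q) * (x r * x s) = (x p * x s) * (x r * x q) := by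
  rw [mul_assoc, mul_assoc]
  congr 1
  rw [← mul_assoc, ← mul_assoc, hxc]

lemma pairW_perm_left {x : I → A} (hxc : ∀ a b c : I, x a * x b * x c = x c * x b * x a)
    {a a' : List I} (h : a.Perm a') :
    ∀ b : List I, a.length ≤ b.length → pairW x a b = pairW x a' b := by
  induction h with
  | nil => intro b _; rfl
  | cons p h ih =>
    intro b hb
    cases b with
    | nil => simp at hb
    | cons q b =>
      simp only [pairW, List.zipWith_cons_cons, List.prod_cons]
      rw [show (List.zipWith (fun p q => x p * x q) _ b).prod = pairW x _ b from rfl,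
        show (List.zipWith (fun p q => x p * x q) _ b).prod = pairW x _ b from rfl,
        ih b (by simpa using Nat.le_of_succ_le_succ hb)]
  | swap p₁ p₂ t =>
    intro b hb
    match b with
    | q₁ :: q₂ :: u =>
      simp only [pairW, List.zipWith_cons_cons, List.prod_cons]
      rw [← mul_assoc (x p₂ * x q₁), ← mul_assoc (x p₁ * x q₁)]
      congr 1
      exact swapB hxc p₂ q₁ p₁ q₂
  | trans h₁ h₂ ih₁ ih₂ =>
    intro b hb
    rw [ih₁ b hb, ih₂ b (h₁.length_eq ▸ hb)]

lemma pairW_perm_right {x : I → A} (hxc : ∀ a b c : I, x a * x b * x c = x c * x b * x a)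
    {b b' : List I} (h : b.Perm b') :
    ∀ a : List I, b.length ≤ a.length → pairW x a b = pairW x a b' := by
  induction h with
  | nil => intro a _; rfl
  | cons q h ih =>
    intro a ha
    cases a with
    | nil => simp at ha
    | cons p a =>
      simp only [pairW, List.zipWith_cons_cons, List.prod_cons]
      rw [show (List.zipWith (fun p q => x p * x q) a _).prod = pairW x a _ from rfl,
        show (List.zipWith (fun p q => x p * x q) a _).prod = pairW x a _ from rfl,
        ih a (by simpa using Nat.le_of_succ_le_succ ha)]
  | swap q₁ q₂ t =>
    intro a ha
    match a with
    | p₁ :: p₂ :: u =>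
      simp only [pairW, List.zipWith_cons_cons, List.prod_cons]
      rw [← mul_assoc (x p₁ * x q₂), ← mul_assoc (x p₁ * x q₁)]
      congr 1
      exact swapC hxc p₁ q₂ p₂ q₁
  | trans h₁ h₂ ih₁ ih₂ =>
    intro a ha
    rw [ih₁ a ha, ih₂ a (h₁.length_eq ▸ ha)]

lemma pairW_self (x : I → A) (c : List I) :
    pairW x c c = (c.map (fun p => x p ^ 2)).prod := by
  induction c with
  | nil => rfl
  | cons p c ih =>
    simp only [pairW, List.zipWith_cons_cons, List.prod_cons, List.map_cons] at *
    rw [ih, sq]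

lemma word_split (x : I → A) :
    ∀ (n : ℕ) (f : Fin (2 * n) → I),
    (List.ofFn fun t => x (f t)).prod =
      pairW x (List.ofFn fun t : Fin n => f ⟨2 * t, by omega⟩)
        (List.ofFn fun t : Fin n => f ⟨2 * t + 1, by omega⟩) := by
  intro n
  induction n with
  | zero => intro f; rfl
  | succ n ih =>
    intro f
    simp only [List.ofFn_succ, List.prod_cons, pairW, List.zipWith_cons_cons]
    rw [mul_assoc]
    congr 1
    rw [show f (Fin.succ 0) = f ⟨2*↑(0 : Fin (n+1))+1, by omega⟩ from
      congrArg f (Fin.ext (by simp))]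
    congr 1
    have h1 : (List.ofFn fun i : Fin (2*n) => x (f i.succ.succ))
        = List.ofFn fun t : Fin (2*n) =>
            x ((fun t : Fin (2*n) => f ⟨(t:ℕ)+2, by omega⟩) t) :=
      congrArg List.ofFn (funext fun t => congrArg x (congrArg f (Fin.ext (by simp; try omega))))
    refine Eq.trans (congrArg List.prod h1) (Eq.trans (ih _) ?_)
    unfold pairW
    congr 1

/-- number of occurrences of value `j` at 0-indexed-even positions of `i` -/
noncomputable def cnt0 [DecidableEq I] {k : ℕ} (i : Fin k → I) (j : I) : ℕ :=
  (Finset.univ.filter fun w : Fin k => i w = j ∧ (w : ℕ) % 2 = 0).card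

noncomputable def cnt1 [DecidableEq I] {k : ℕ} (i : Fin k → I) (j : I) : ℕ :=
  (Finset.univ.filter fun w : Fin k => i w = j ∧ (w : ℕ) % 2 = 1).card

/-- the list of distinct values of `i` -/
noncomputable def valsL [DecidableEq I] {k : ℕ} (i : Fin k → I) : List I :=
  (Finset.univ.image i).toList

section Counting
variable [DecidableEq I] {k : ℕ} (i : Fin k → I)

lemma block_inter_eq (v : Fin k) (m : ℕ) :
    block (Setoid.ker i) v ∩ {w : Fin k | (w : ℕ) % 2 = m} =
      ↑(Finset.univ.filter fun w : Fin k => i w = i v ∧ (w : ℕ) % 2 = m) := by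
  ext w
  simp [block, Setoid.ker, Set.mem_setOf_eq, eq_comm]

lemma cnt0_eq_cnt1 (hbal : BalancedPartition (Setoid.ker i)) (j : I) :
    cnt0 i j = cnt1 i j := by
  by_cases hj : ∃ v, i v = j
  · obtain ⟨v, rfl⟩ := hj
    have h := hbal v
    rwa [block_inter_eq i v 0, block_inter_eq i v 1,
      Set.ncard_coe_finset, Set.ncard_coe_finset] at h
  · push_neg at hj
    unfold cnt0 cnt1
    rw [Finset.filter_false_of_mem, Finset.filter_false_of_mem] <;>
      simp_all +contextual

lemma cnt0_add_cnt1 (j : I) :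
    cnt0 i j + cnt1 i j = (Finset.univ.filter fun w : Fin k => i w = j).card := by
  have h2 := Finset.card_filter_add_card_filter_not
    (s := Finset.univ.filter fun w : Fin k => i w = j)
    (p := fun w : Fin k => (w : ℕ) % 2 = 0)
  rw [Finset.filter_filter, Finset.filter_filter] at h2
  unfold cnt0 cnt1
  rw [show (Finset.univ.filter fun w : Fin k => i w = j ∧ (w : ℕ) % 2 = 1)
      = Finset.univ.filter fun w : Fin k => i w = j ∧ ¬ (w : ℕ) % 2 = 0 by
    apply Finset.filter_congr; intro w _; constructor <;> (intro h; exact ⟨h.1, by omega⟩)]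
  exact h2

lemma cnt0_pos (hbal : BalancedPartition (Setoid.ker i)) {j : I}
    (hj : ∃ w, i w = j) : 1 ≤ cnt0 i j := by
  obtain ⟨w, hw⟩ := hj
  have h1 : w ∈ Finset.univ.filter fun w : Fin k => i w = j := by simp [hw]
  have h2 : 1 ≤ (Finset.univ.filter fun w : Fin k => i w = j).card :=
    Finset.card_pos.mpr ⟨w, h1⟩
  have h3 := cnt0_add_cnt1 i j
  have h4 := cnt0_eq_cnt1 i hbal j
  omega

lemma cnt0_eq_zero {j : I} (hj : ¬ ∃ w, i w = j) : cnt0 i j = 0 := by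
  push_neg at hj
  unfold cnt0
  rw [Finset.filter_false_of_mem] <;> simp_all +contextual

lemma sum_cnt0 :
    ∑ j ∈ Finset.univ.image i, cnt0 i j
      = (Finset.univ.filter fun w : Fin k => (w : ℕ) % 2 = 0).card := by
  rw [Finset.card_eq_sum_card_fiberwise (f := i) (t := Finset.univ.image i)
    (fun w _ => Finset.mem_image_of_mem i (Finset.mem_univ w))]
  apply Finset.sum_congr rfl
  intro j _
  unfold cnt0
  rw [Finset.filter_filter]
  congr 1
  apply Finset.filter_congr
  intro w _
  tauto

lemma sum_cnt1 :
    ∑ j ∈ Finset.univ.image i, cnt1 i j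
      = (Finset.univ.filter fun w : Fin k => (w : ℕ) % 2 = 1).card := by
  rw [Finset.card_eq_sum_card_fiberwise (f := i) (t := Finset.univ.image i)
    (fun w _ => Finset.mem_image_of_mem i (Finset.mem_univ w))]
  apply Finset.sum_congr rfl
  intro j _
  unfold cnt1
  rw [Finset.filter_filter]
  congr 1
  apply Finset.filter_congr
  intro w _
  tauto

lemma k_even (hbal : BalancedPartition (Setoid.ker i)) :
    k = 2 * (Finset.univ.filter fun w : Fin k => (w : ℕ) % 2 = 0).card := by
  have h1 : (Finset.univ.filter fun w : Fin k => (w : ℕ) % 2 = 0).card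
      = (Finset.univ.filter fun w : Fin k => (w : ℕ) % 2 = 1).card := by
    rw [← sum_cnt0 i, ← sum_cnt1 i]
    exact Finset.sum_congr rfl fun j _ => cnt0_eq_cnt1 i hbal j
  have h2 := Finset.card_filter_add_card_filter_not
    (s := (Finset.univ : Finset (Fin k))) (p := fun w : Fin k => (w : ℕ) % 2 = 0)
  rw [Finset.card_univ, Fintype.card_fin] at h2
  have h3 : (Finset.univ.filter fun w : Fin k => ¬ (w : ℕ) % 2 = 0)
      = (Finset.univ.filter fun w : Fin k => (w : ℕ) % 2 = 1) := by
    apply Finset.filter_congr; intro w _; simp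
  rw [h3] at h2
  omega

end Counting

lemma count_ofFn [DecidableEq I] {n : ℕ} (g : Fin n → I) (j : I) :
    (List.ofFn g).count j = (Finset.univ.filter fun t => g t = j).card := by
  rw [← Multiset.coe_count, ← Fin.univ_val_map, Multiset.count_map, Finset.card_def,
    Finset.filter_val]
  congr 1
  apply Multiset.filter_congr
  intro t _
  exact eq_comm

section Fiber
variable {I : Type*} [DecidableEq I]

lemma card_even_fiber (n : ℕ) (i : Fin (2*n) → I) (j : I) :
    (Finset.univ.filter fun t : Fin n => i ⟨2*t, by omega⟩ = j).card = cnt0 i j := by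
  unfold cnt0
  apply Finset.card_bij' (fun t _ => (⟨2*(t : Fin n), by omega⟩ : Fin (2*n)))
    (fun w _ => ⟨(w : Fin (2*n)) / 2, by omega⟩)
  case hi =>
    intro a ha
    simp only [Finset.mem_filter, Finset.mem_univ, true_and] at ha ⊢
    exact ⟨ha, by omega⟩
  case hj =>
    intro w hw
    simp only [Finset.mem_filter, Finset.mem_univ, true_and] at hw ⊢
    obtain ⟨h1, h2⟩ := hw
    convert h1 using 2
    exact Fin.ext (by simp; omega)
  case left_inv =>
    intro a ha
    exact Fin.ext (by simp; try omega)
  case right_inv =>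
    intro w hw
    simp only [Finset.mem_filter, Finset.mem_univ, true_and] at hw
    exact Fin.ext (by simp; omega)

lemma card_odd_fiber (n : ℕ) (i : Fin (2*n) → I) (j : I) :
    (Finset.univ.filter fun t : Fin n => i ⟨2*t+1, by omega⟩ = j).card = cnt1 i j := by
  unfold cnt1
  apply Finset.card_bij' (fun t _ => (⟨2*(t : Fin n)+1, by omega⟩ : Fin (2*n)))
    (fun w _ => ⟨(w : Fin (2*n)) / 2, by omega⟩)
  case hi =>
    intro a ha
    simp only [Finset.mem_filter, Finset.mem_univ, true_and] at ha ⊢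
    exact ⟨ha, by omega⟩
  case hj =>
    intro w hw
    simp only [Finset.mem_filter, Finset.mem_univ, true_and] at hw ⊢
    obtain ⟨h1, h2⟩ := hw
    convert h1 using 2
    exact Fin.ext (by simp; omega)
  case left_inv =>
    intro a ha
    exact Fin.ext (by simp; try omega)
  case right_inv =>
    intro w hw
    simp only [Finset.mem_filter, Finset.mem_univ, true_and] at hw
    exact Fin.ext (by simp; omega)

end Fiber

/-- the canonical grouped list: each `j` of `L` repeated `c j` times -/
def canonC (c : I → ℕ) : List I → List I
  | [] => []
  | p :: L => List.replicate (c p) p ++ canonC c L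

lemma count_canonC [DecidableEq I] (c : I → ℕ) :
    ∀ L : List I, L.Nodup → ∀ j, (canonC c L).count j = if j ∈ L then c j else 0 := by
  intro L
  induction L with
  | nil => intro _ j; simp [canonC]
  | cons p L ih =>
    intro hnd j
    rw [List.nodup_cons] at hnd
    simp only [canonC, List.count_append, List.count_replicate, ih hnd.2 j, List.mem_cons]
    by_cases hjp : j = p
    · subst hjp
      simp [hnd.1]
    · simp [hjp, Ne.symm hjp]

lemma length_canonC (c : I → ℕ) (L : List I) :
    (canonC c L).length = (L.map c).sum := by
  induction L with
  | nil => rfl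
  | cons p L ih => simp [canonC, ih]

lemma prod_canonC (x : I → A) (c : I → ℕ) :
    ∀ L : List I, ((canonC c L).map fun p => x p ^ 2).prod
      = (L.map fun j => x j ^ (2 * c j)).prod := by
  intro L
  induction L with
  | nil => rfl
  | cons p L ih =>
    simp only [canonC, List.map_append, List.prod_append, List.map_replicate,
      List.prod_replicate, List.map_cons, List.prod_cons, ih]
    congr 1
    rw [← pow_mul]

lemma map_eq_ofFn_get {α β : Type*} (l : List α) (g : α → β) :
    l.map g = List.ofFn (fun r => g (l.get r)) := by
  conv_lhs => rw [← List.ofFn_get l]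
  rw [List.map_ofFn]
  rfl

/-- The key normal-form computation: for a half-commuting family with half-independent
squares, the value of `φ` on a balanced word is determined by even moments. -/
lemma key_moment [DecidableEq I] {A : Type*} [Ring A] (φ : A → ℂ) (x : I → A)
    (hxc : ∀ a b c : I, x a * x b * x c = x c * x b * x a)
    (hind : ∀ (m : ℕ) (jj : Fin m → I), Function.Injective jj → ∀ e : Fin m → ℕ,
      (∀ r, 1 ≤ e r) →
      φ (List.ofFn (fun r => x (jj r) ^ (2 * e r))).prod = ∏ r, φ (x (jj r) ^ (2 * e r)))
    {k : ℕ} (i : Fin k → I) (hbal : BalancedPartition (Setoid.ker i)) :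
    φ (List.ofFn fun t => x (i t)).prod
      = ∏ r : Fin (valsL i).length,
          φ (x ((valsL i).get r) ^ (2 * cnt0 i ((valsL i).get r))) := by
  obtain ⟨n, rfl⟩ : ∃ n, k = 2 * n := ⟨_, k_even i hbal⟩
  have a := List.ofFn fun t : Fin n => i ⟨2 * t, by omega⟩
  set a : List I := List.ofFn fun t : Fin n => i ⟨2 * t, by omega⟩ with ha_def
  set b : List I := List.ofFn fun t : Fin n => i ⟨2 * t + 1, by omega⟩ with hb_def
  set L : List I := valsL i with hL_def
  set c : List I := canonC (cnt0 i) L with hc_def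
  have hLnd : L.Nodup := Finset.nodup_toList _
  have hmemL : ∀ j : I, j ∈ L ↔ ∃ w, i w = j := by
    intro j
    rw [hL_def]
    unfold valsL
    simp [Finset.mem_toList, Finset.mem_image]
  have ha : ∀ j, a.count j = cnt0 i j := fun j => by
    rw [ha_def, count_ofFn, card_even_fiber]
  have hb : ∀ j, b.count j = cnt1 i j := fun j => by
    rw [hb_def, count_ofFn, card_odd_fiber]
  have hc : ∀ j, c.count j = cnt0 i j := by
    intro j
    rw [hc_def, count_canonC (cnt0 i) L hLnd j]
    by_cases hj : j ∈ L
    · simp [hj]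
    · rw [if_neg hj]
      exact (cnt0_eq_zero i (by rwa [← hmemL])).symm
  have pac : a.Perm c := List.perm_iff_count.2 fun j => by rw [ha, hc]
  have pbc : b.Perm c := List.perm_iff_count.2 fun j => by
    rw [hb, hc, cnt0_eq_cnt1 i hbal]
  have hal : a.length = n := by rw [ha_def, List.length_ofFn]
  have hbl : b.length = n := by rw [hb_def, List.length_ofFn]
  have hcl : c.length = n := by rw [← pac.length_eq, hal]
  calc φ (List.ofFn fun t => x (i t)).prod
      = φ (pairW x a b) := congrArg φ (word_split x n i)
    _ = φ (pairW x c b) := congrArg φ (pairW_perm_left hxc pac b (by omega))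
    _ = φ (pairW x c c) := congrArg φ (pairW_perm_right hxc pbc c (by omega))
    _ = φ (List.ofFn fun r : Fin L.length =>
            x (L.get r) ^ (2 * cnt0 i (L.get r))).prod := by
        rw [pairW_self x c, hc_def, prod_canonC x (cnt0 i) L,
          map_eq_ofFn_get L (fun j => x j ^ (2 * cnt0 i j))]
    _ = ∏ r : Fin L.length, φ (x (L.get r) ^ (2 * cnt0 i (L.get r))) := by
        apply hind L.length L.get (List.nodup_iff_injective_get.1 hLnd)
          (fun r => cnt0 i (L.get r))
        intro r
        exact cnt0_pos i hbal ((hmemL (L.get r)).1 (List.get_mem L r))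

end HalfIndepAux

/-- The joint distribution of a half-independent family is determined by the individual
distributions of its members. -/
theorem halfIndependent_joint_moments {A A' : Type*}
    [Ring A] [Algebra ℂ A] [Ring A'] [Algebra ℂ A']
    (φ : A →ₗ[ℂ] ℂ) (hφ1 : φ 1 = 1) (φ' : A' →ₗ[ℂ] ℂ) (hφ'1 : φ' 1 = 1)
    {I : Type*} (x : I → A) (y : I → A')
    (hxc : ∀ a b c : I, x a * x b * x c = x c * x b * x a)
    (hyc : ∀ a b c : I, y a * y b * y c = y c * y b * y a)
    (hxind : HalfIndependent (φ : A → ℂ) x)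
    (hyind : HalfIndependent (φ' : A' → ℂ) y)
    (hmom : ∀ (i : I) (n : ℕ), 1 ≤ n → φ (x i ^ n) = φ' (y i ^ n)) :
    ∀ (k : ℕ), 1 ≤ k → ∀ i : Fin k → I,
      φ (List.ofFn (fun t => x (i t))).prod = φ' (List.ofFn (fun t => y (i t))).prod := by
  intro k hk i
  classical
  by_cases hbal : BalancedPartition (Setoid.ker i)
  · rw [key_moment (φ : A → ℂ) x hxc hxind.1 i hbal,
      key_moment (φ' : A' → ℂ) y hyc hyind.1 i hbal]
    apply Finset.prod_congr rfl
    intro r _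
    apply hmom
    have h1 : 1 ≤ cnt0 i ((valsL i).get r) := by
      apply cnt0_pos i hbal
      have : (valsL i).get r ∈ valsL i := List.get_mem _ r
      unfold valsL at this
      rw [Finset.mem_toList, Finset.mem_image] at this
      obtain ⟨w, _, hw⟩ := this
      exact ⟨w, hw⟩
    omega
  · rw [hxind.2 k i hbal, hyind.2 k i hbal]
end

section
/- Let g be a signed permutation matrix of size n, i.e. g_{ij} = ε_j if i = τ(j) and g_{ij} = 0 otherwise, for some permutation τ of {1,…,n} and signs ε ∈ {−1, 1}ⁿ. Let π be a partition of {1,…,k} all of whose blocks have even cardinality, and let j₁,…,j_k ∈ {1,…,n}. Then Σ g_{i₁j₁} ⋯ g_{i_kj_k}, the sum taken over all i₁,…,i_k ∈ {1,…,n} with π ≤ ker i, equals 1 if π ≤ ker j and equals 0 otherwise. -/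
open scoped Classical in
/-- For a signed permutation matrix `g` and a partition `π` with even block sizes,
`Σ_{i : π ≤ ker i} g_{i₁j₁} ⋯ g_{i_kj_k}` is `1` if `π ≤ ker j` and `0` otherwise. -/
theorem signedPermutationMatrix_partition_sum (n k : ℕ) (τ : Equiv.Perm (Fin n))
    (ε : Fin n → ℝ) (hε : ∀ j : Fin n, ε j = 1 ∨ ε j = -1)
    (g : Matrix (Fin n) (Fin n) ℝ)
    (hg : ∀ i j : Fin n, g i j = if i = τ j then ε j else 0)
    (π : Setoid (Fin k)) (hπ : ∀ v : Fin k, Even (block π v).ncard)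
    (j : Fin k → Fin n) :
    ∑ i ∈ Finset.univ.filter (fun i : Fin k → Fin n => π ≤ Setoid.ker i),
        ∏ t : Fin k, g (i t) (j t) =
      if π ≤ Setoid.ker j then 1 else 0 := by
  classical
  have key : ∀ i : Fin k → Fin n, (∏ t : Fin k, g (i t) (j t)) ≠ 0 →
      i = fun t => τ (j t) := by
    intro i h
    funext t
    by_contra hne
    exact h (Finset.prod_eq_zero (Finset.mem_univ t) (by rw [hg]; simp [hne]))
  by_cases hj : π ≤ Setoid.ker j
  · rw [if_pos hj]
    rw [Finset.sum_eq_single (fun t => τ (j t))]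
    · have h1 : (∏ t : Fin k, g (τ (j t)) (j t)) = ∏ t : Fin k, ε (j t) := by
        apply Finset.prod_congr rfl
        intro t _
        rw [hg]; simp
      rw [h1]
      have : Fintype (Quotient π) := Fintype.ofFinite _
      rw [← Finset.prod_fiberwise Finset.univ (Quotient.mk π) (fun t => ε (j t))]
      apply Finset.prod_eq_one
      intro c _
      obtain ⟨v, rfl⟩ := Quotient.exists_rep c
      have hconst : ∀ t ∈ Finset.univ.filter
          (fun t => Quotient.mk π t = Quotient.mk π v), ε (j t) = ε (j v) := by
        intro t ht
        simp only [Finset.mem_filter, Finset.mem_univ, true_and] at ht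
        have hr : π.r v t := Setoid.symm (Quotient.eq''.mp ht)
        have : j v = j t := hj hr
        rw [this]
      rw [Finset.prod_congr rfl hconst, Finset.prod_const]
      have hcard : (Finset.univ.filter
          (fun t => Quotient.mk π t = Quotient.mk π v)).card = (block π v).ncard := by
        rw [← Set.ncard_coe_finset]
        congr 1
        ext t
        simp only [Finset.coe_filter, Finset.mem_univ, true_and, Set.mem_setOf_eq, block]
        constructor
        · intro h; exact Setoid.symm (Quotient.eq''.mp h)
        · intro h; exact Quotient.sound (Setoid.symm h)
      rw [hcard]
      rcases hε (j v) with h | h <;> rw [h]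
      · simp
      · exact Even.neg_one_pow (hπ v)
    · intro b hb hbne
      by_contra h
      exact hbne (key b h)
    · intro hmem
      exfalso
      apply hmem
      simp only [Finset.mem_filter, Finset.mem_univ, true_and]
      intro a b hab
      exact congrArg τ (hj hab)
  · rw [if_neg hj]
    apply Finset.sum_eq_zero
    intro i hi
    by_contra h
    have hi0 := key i h
    subst hi0
    simp only [Finset.mem_filter, Finset.mem_univ, true_and] at hi
    apply hj
    intro a b hab
    exact τ.injective (hi hab)
end

section
/- Let g be a real orthogonal n×n matrix such that every row sum and every column sum of g equals 1. Let π be a partition of {1,…,k} all of whose blocks have at most two elements, and let j₁,…,j_k ∈ {1,…,n}. Then Σ g_{i₁j₁} ⋯ g_{i_kj_k}, the sum taken over all i₁,…,i_k ∈ {1,…,n} with π ≤ ker i, equals 1 if π ≤ ker j and equals 0 otherwise. -/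
open scoped Classical in
/-- For an orthogonal matrix `g` with all row and column sums equal to `1`, and a partition
`π` with blocks of size at most two,
`Σ_{i : π ≤ ker i} g_{i₁j₁} ⋯ g_{i_kj_k}` is `1` if `π ≤ ker j` and `0` otherwise. -/
theorem bistochastic_partition_sum (n k : ℕ) (g : Matrix (Fin n) (Fin n) ℝ)
    (hg : g.transpose * g = 1)
    (hrow : ∀ i : Fin n, ∑ j : Fin n, g i j = 1)
    (hcol : ∀ j : Fin n, ∑ i : Fin n, g i j = 1)
    (π : Setoid (Fin k)) (hπ : ∀ v : Fin k, (block π v).ncard ≤ 2)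
    (j : Fin k → Fin n) :
    ∑ i ∈ Finset.univ.filter (fun i : Fin k → Fin n => π ≤ Setoid.ker i),
        ∏ t : Fin k, g (i t) (j t) =
      if π ≤ Setoid.ker j then 1 else 0 := by
  classical
  set F : Quotient π → Finset (Fin k) :=
    fun c => Finset.univ.filter (fun t => Quotient.mk π t = c) with hF
  have hmemF : ∀ (c : Quotient π) (t : Fin k), t ∈ F c ↔ Quotient.mk π t = c := by
    intro c t; simp [hF]
  -- Step 1: reindex the sum by functions on the quotient
  have himg : Finset.univ.filter (fun i : Fin k → Fin n => π ≤ Setoid.ker i)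
      = Finset.univ.image (fun f : Quotient π → Fin n => fun t => f (Quotient.mk π t)) := by
    ext i
    simp only [Finset.mem_filter, Finset.mem_univ, true_and, Finset.mem_image]
    constructor
    · intro hi
      refine ⟨fun c => i c.out, funext fun t => ?_⟩
      have h1 : Quotient.mk π ((Quotient.mk π t).out) = Quotient.mk π t :=
        Quotient.out_eq _
      have h2 : π.r ((Quotient.mk π t).out) t := Quotient.exact h1
      exact (Setoid.le_def.mp hi h2 : _)
    · rintro ⟨f, rfl⟩
      refine Setoid.le_def.mpr fun {a b} hab => ?_
      have : Quotient.mk π a = Quotient.mk π b := Quotient.sound hab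
      show f (Quotient.mk π a) = f (Quotient.mk π b)
      rw [this]
  have hinj : ∀ f ∈ Finset.univ, ∀ f' ∈ Finset.univ,
      (fun f : Quotient π → Fin n => fun t => f (Quotient.mk π t)) f
        = (fun f : Quotient π → Fin n => fun t => f (Quotient.mk π t)) f' → f = f' := by
    intro f _ f' _ h
    funext c
    induction c using Quotient.ind with
    | _ t => exact congrFun h t
  rw [himg, Finset.sum_image hinj]
  -- Step 2: factor the product over the fibers
  have step2 : ∀ f : Quotient π → Fin n,
      (∏ t : Fin k, g (f (Quotient.mk π t)) (j t))
        = ∏ c : Quotient π, ∏ t ∈ F c, g (f c) (j t) := by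
    intro f
    rw [← Finset.prod_fiberwise Finset.univ (fun t => Quotient.mk π t)
      (fun t => g (f (Quotient.mk π t)) (j t))]
    refine Finset.prod_congr rfl fun c _ => Finset.prod_congr rfl fun t ht => ?_
    rw [(hmemF c t).mp ht]
  simp_rw [step2]
  -- Step 3: exchange sum and product
  rw [← Fintype.prod_sum (fun c (a : Fin n) => ∏ t ∈ F c, g a (j t))]
  -- facts about fibers
  have houtF : ∀ c : Quotient π, c.out ∈ F c := fun c => (hmemF c c.out).mpr (Quotient.out_eq c)
  have hcard : ∀ c : Quotient π, (F c).card ≤ 2 := by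
    intro c
    have hset : (↑(F c) : Set (Fin k)) = block π c.out := by
      ext t
      simp only [Finset.coe_filter, Set.mem_setOf_eq, hmemF, Finset.mem_coe]
      show _ ↔ π.r c.out t
      constructor
      · intro h
        have : Quotient.mk π t = Quotient.mk π c.out := by rw [h, Quotient.out_eq]
        exact Setoid.symm' π (Quotient.exact this)
      · intro h
        have : Quotient.mk π t = Quotient.mk π c.out := Quotient.sound (Setoid.symm' π h)
        rw [this, Quotient.out_eq]
    have := hπ c.out
    rwa [← hset, Set.ncard_coe_finset] at this
  -- the value of each factor
  have key2 : ∀ s t : Fin k, s ≠ t →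
      (∑ a : Fin n, g a (j s) * g a (j t)) = if j s = j t then 1 else 0 := by
    intro s t _
    have : (g.transpose * g) (j s) (j t) = ∑ a : Fin n, g a (j s) * g a (j t) := by
      simp [Matrix.mul_apply, Matrix.transpose_apply]
    rw [← this, hg, Matrix.one_apply]
  by_cases hj : π ≤ Setoid.ker j
  · rw [if_pos hj]
    refine Finset.prod_eq_one fun c _ => ?_
    rcases Nat.lt_or_ge (F c).card 2 with h2 | h2
    · -- singleton fiber
      have h1 : (F c).card = 1 := by
        have : 0 < (F c).card := Finset.card_pos.mpr ⟨c.out, houtF c⟩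
        omega
      obtain ⟨t, ht⟩ := Finset.card_eq_one.mp h1
      simp [ht, hcol (j t)]
    · have h2' : (F c).card = 2 := le_antisymm (hcard c) h2
      obtain ⟨s, t, hst, hFc⟩ := Finset.card_eq_two.mp h2'
      have hs : Quotient.mk π s = c := (hmemF c s).mp (by rw [hFc]; simp)
      have ht : Quotient.mk π t = c := (hmemF c t).mp (by rw [hFc]; simp)
      have hrel : π.r s t := Quotient.exact (hs.trans ht.symm)
      have hjj : j s = j t := Setoid.le_def.mp hj hrel
      simp only [hFc, Finset.prod_pair hst]
      rw [key2 s t hst, if_pos hjj]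
  · rw [if_neg hj]
    -- find a witness pair
    have : ∃ s t : Fin k, π.r s t ∧ j s ≠ j t := by
      by_contra h
      push_neg at h
      exact hj (Setoid.le_def.mpr fun {a b} hab => h a b hab)
    obtain ⟨s, t, hrel, hjne⟩ := this
    have hsne : s ≠ t := fun h => hjne (by rw [h])
    set c := Quotient.mk π s with hc
    have hsF : s ∈ F c := (hmemF c s).mpr rfl
    have htF : t ∈ F c := (hmemF c t).mpr (Quotient.sound hrel).symm
    have h2 : (F c).card = 2 := by
      have : ({s, t} : Finset (Fin k)) ⊆ F c := by
        intro x hx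
        rcases Finset.mem_insert.mp hx with rfl | hx
        · exact hsF
        · rw [Finset.mem_singleton.mp hx]; exact htF
      have := Finset.card_le_card this
      rw [Finset.card_pair hsne] at this
      exact le_antisymm (hcard c) this
    obtain ⟨s', t', hst', hFc⟩ := Finset.card_eq_two.mp h2
    have hjne' : j s' ≠ j t' := by
      rw [hFc] at hsF htF
      simp only [Finset.mem_insert, Finset.mem_singleton] at hsF htF
      rcases hsF with rfl | rfl <;> rcases htF with rfl | rfl
      · exact absurd rfl hsne
      · exact hjne
      · exact hjne.symm
      · exact absurd rfl hsne
    refine Finset.prod_eq_zero (Finset.mem_univ c) ?_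
    simp only [hFc, Finset.prod_pair hst']
    rw [key2 s' t' hst', if_neg hjne']
end

section
/- Let A be a unital ℂ-algebra, φ : A → ℂ a linear functional with φ(1) = 1, B ⊆ A a unital subalgebra, and E : A → B a conditional expectation, i.e. a linear map with E[1] = 1 and E[b a b′] = b E[a] b′ for all b, b′ ∈ B and a ∈ A, such that φ ∘ E = φ. Let x₁,…,x_n ∈ A and assume the subalgebra generated by B and x₁,…,x_n is commutative. Assume that for every k ≥ 1 and all j₁,…,j_k ∈ {1,…,n}: E[x_{j₁} ⋯ x_{j_k}] = N_π(j) · E[x₁²]^{k/2} if k is even, where N_π(j) is the number of pair partitions π of {1,…,k} with π ≤ ker j, and E[x_{j₁} ⋯ x_{j_k}] = 0 if k is odd (i.e. x₁,…,x_n are conditionally independent, identically distributed, centered Gaussian given B). Then the sequence (x₁,…,x_n) is O_n-invariant: for every real orthogonal n×n matrix g, every k ≥ 1, and all j₁,…,j_k ∈ {1,…,n}, φ(x_{j₁} ⋯ x_{j_k}) = Σ_{i₁,…,i_k=1}^{n} g_{i₁j₁} ⋯ g_{i_kj_k} · φ(x_{i₁} ⋯ x_{i_k}). -/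
instance setoid_finite (k : ℕ) : Finite (Setoid (Fin k)) :=
  Finite.of_injective (fun π => ⇑π) fun a b h => Setoid.ext fun x y => by
    simp only at h; rw [h]

noncomputable instance setoid_fintype (k : ℕ) : Fintype (Setoid (Fin k)) :=
  Fintype.ofFinite _

open scoped Classical in
lemma key_sum {n k : ℕ} (g : Matrix (Fin n) (Fin n) ℝ) (hg : g.transpose * g = 1)
    (j : Fin k → Fin n) (π : Setoid (Fin k)) (hpair : ∀ v : Fin k, (block π v).ncard = 2) :
    ∑ i : Fin k → Fin n,
      (if π ≤ Setoid.ker i then (1:ℂ) else 0) * ∏ t : Fin k, (g (i t) (j t) : ℂ)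
      = if π ≤ Setoid.ker j then 1 else 0 := by
  classical
  have h2 : ∀ c : Quotient π, ∃ a b, a ≠ b ∧ block π c.out = {a, b} :=
    fun c => Set.ncard_eq_two.1 (hpair c.out)
  choose s t hst hblock using h2
  -- membership in the block finset
  have hmem : ∀ (c : Quotient π) (w : Fin k),
      w ∈ ({s c, t c} : Finset (Fin k)) ↔ Quotient.mk π w = c := by
    intro c w
    have : w ∈ ({s c, t c} : Set (Fin k)) ↔ π.r c.out w := by
      rw [← hblock c]; rfl
    simp only [Finset.mem_insert, Finset.mem_singleton]
    rw [show (w = s c ∨ w = t c) ↔ w ∈ ({s c, t c} : Set (Fin k)) by simp, this]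
    constructor
    · intro h
      rw [← Quotient.out_eq c]
      exact (Quotient.sound h).symm
    · intro h
      exact Quotient.exact (by rw [Quotient.out_eq, h])
  have hrel : ∀ (c : Quotient π) (w : Fin k), w ∈ ({s c, t c} : Finset (Fin k)) → π.r c.out w := by
    intro c w hw
    have := (hmem c w).1 hw
    exact Quotient.exact (by rw [Quotient.out_eq, this])
  -- the equivalence between functions on the quotient and functions constant on blocks
  let e : (Quotient π → Fin n) ≃ {i : Fin k → Fin n // π ≤ Setoid.ker i} :=
    { toFun := fun b => ⟨fun w => b (Quotient.mk π w), by
        intro a a' h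
        rw [Setoid.ker_def]
        exact congrArg b (Quotient.sound h)⟩
      invFun := fun i c => i.1 c.out
      left_inv := fun b => by
        funext c
        exact congrArg b (Quotient.out_eq c)
      right_inv := fun i => Subtype.ext (funext fun w => by
        have h : π.r (Quotient.mk π w).out w := Quotient.exact (Quotient.out_eq _)
        exact Setoid.ker_def.1 (i.2 h)) }
  calc ∑ i : Fin k → Fin n,
        (if π ≤ Setoid.ker i then (1:ℂ) else 0) * ∏ t' : Fin k, (g (i t') (j t') : ℂ)
      = ∑ i : {i : Fin k → Fin n // π ≤ Setoid.ker i}, ∏ t' : Fin k, (g (i.1 t') (j t') : ℂ) := by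
        simp only [ite_mul, one_mul, zero_mul]
        rw [← Finset.sum_filter]
        exact Finset.sum_subtype _ (fun i => by simp) _
    _ = ∑ b : Quotient π → Fin n, ∏ t' : Fin k, (g (b (Quotient.mk π t')) (j t') : ℂ) := by
        rw [← Equiv.sum_comp e (fun i => ∏ t' : Fin k, (g (i.1 t') (j t') : ℂ))]
        rfl
    _ = ∑ b : Quotient π → Fin n, ∏ c : Quotient π,
          ∏ w : {w : Fin k // Quotient.mk π w = c}, (g (b c) (j w.1) : ℂ) := by
        refine Finset.sum_congr rfl fun b _ => ?_
        rw [← Fintype.prod_fiberwise (fun w => Quotient.mk π w)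
          (fun w => (g (b (Quotient.mk π w)) (j w) : ℂ))]
        exact Finset.prod_congr rfl fun c _ => Finset.prod_congr rfl fun w _ => by rw [w.2]
    _ = ∏ c : Quotient π, ∑ m : Fin n,
          ∏ w : {w : Fin k // Quotient.mk π w = c}, (g m (j w.1) : ℂ) := by
        rw [Finset.prod_univ_sum (fun _ => Finset.univ)
          (fun c m => ∏ w : {w : Fin k // Quotient.mk π w = c}, (g m (j w.1) : ℂ)),
          Fintype.piFinset_univ]
    _ = ∏ c : Quotient π, if j (s c) = j (t c) then (1:ℂ) else 0 := by
        refine Finset.prod_congr rfl fun c _ => ?_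
        have hprod : ∀ m : Fin n,
            (∏ w : {w : Fin k // Quotient.mk π w = c}, (g m (j w.1) : ℂ))
              = (g m (j (s c)) : ℂ) * (g m (j (t c)) : ℂ) := by
          intro m
          rw [← Finset.prod_subtype ({s c, t c} : Finset (Fin k)) (hmem c)
            (fun w => (g m (j w) : ℂ)), Finset.prod_pair (hst c)]
        simp only [hprod]
        have : ∑ m : Fin n, g m (j (s c)) * g m (j (t c)) =
            (if j (s c) = j (t c) then (1:ℝ) else 0) := by
          have := congrFun (congrFun hg (j (s c))) (j (t c))
          rw [Matrix.mul_apply, Matrix.one_apply] at this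
          simpa [Matrix.transpose_apply] using this
        calc ∑ m : Fin n, (g m (j (s c)) : ℂ) * (g m (j (t c)) : ℂ)
            = ((∑ m : Fin n, g m (j (s c)) * g m (j (t c)) : ℝ) : ℂ) := by push_cast; rfl
          _ = if j (s c) = j (t c) then (1:ℂ) else 0 := by rw [this]; split <;> simp
    _ = if ∀ c : Quotient π, j (s c) = j (t c) then (1:ℂ) else 0 := by
        rw [Finset.prod_boole]
        simp
    _ = if π ≤ Setoid.ker j then 1 else 0 := by
        congr 1
        simp only [eq_iff_iff]
        constructor
        · intro h
          rw [Setoid.le_def]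
          intro a b hab
          have ha := hrel (Quotient.mk π a) a (by rw [hmem])
          have hb := hrel (Quotient.mk π a) b (by rw [hmem]; exact (Quotient.sound hab).symm)
          have has : a ∈ ({s (Quotient.mk π a), t (Quotient.mk π a)} : Finset (Fin k)) := by
            rw [hmem]
          have hbs : b ∈ ({s (Quotient.mk π a), t (Quotient.mk π a)} : Finset (Fin k)) := by
            rw [hmem]; exact (Quotient.sound hab).symm
          have hj := h (Quotient.mk π a)
          simp only [Finset.mem_insert, Finset.mem_singleton] at has hbs
          rcases has with h1 | h1 <;> rcases hbs with h2 | h2 <;> rw [h1, h2] <;>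
            first | rfl | exact hj | exact hj.symm
        · intro h c
          have hs := hrel c (s c) (by simp)
          have ht := hrel c (t c) (by simp)
          exact Setoid.ker_def.1 (Setoid.le_def.1 h (π.trans (π.symm hs) ht))

open scoped Classical in
lemma card_eq_sum {n k : ℕ} (i : Fin k → Fin n) :
    ((Nat.card {π : Setoid (Fin k) //
        (∀ v : Fin k, (block π v).ncard = 2) ∧ π ≤ Setoid.ker i}) : ℂ)
      = ∑ π : Setoid (Fin k),
          if (∀ v : Fin k, (block π v).ncard = 2) ∧ π ≤ Setoid.ker i then (1:ℂ) else 0 := by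
  rw [Nat.card_eq_fintype_card, Fintype.card_subtype, Finset.card_filter]
  push_cast
  exact Finset.sum_congr rfl fun π _ => by split <;> simp

open scoped Classical in
lemma main_sum {n k : ℕ} (g : Matrix (Fin n) (Fin n) ℝ) (hg : g.transpose * g = 1)
    (j : Fin k → Fin n) :
    ∑ i : Fin k → Fin n, (∏ t : Fin k, (g (i t) (j t) : ℂ)) *
        ((Nat.card {π : Setoid (Fin k) //
          (∀ v : Fin k, (block π v).ncard = 2) ∧ π ≤ Setoid.ker i}) : ℂ)
      = ((Nat.card {π : Setoid (Fin k) //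
          (∀ v : Fin k, (block π v).ncard = 2) ∧ π ≤ Setoid.ker j}) : ℂ) := by
  rw [card_eq_sum j]
  simp only [card_eq_sum, Finset.mul_sum]
  rw [Finset.sum_comm]
  refine Finset.sum_congr rfl fun π _ => ?_
  by_cases hP : ∀ v : Fin k, (block π v).ncard = 2
  · have : ∀ i : Fin k → Fin n,
        (∏ t : Fin k, (g (i t) (j t) : ℂ)) *
          (if (∀ v : Fin k, (block π v).ncard = 2) ∧ π ≤ Setoid.ker i then (1:ℂ) else 0)
        = (if π ≤ Setoid.ker i then (1:ℂ) else 0) * ∏ t : Fin k, (g (i t) (j t) : ℂ) := by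
      intro i
      rw [mul_comm]
      congr 1
      simp [hP]
    simp only [this]
    rw [key_sum g hg j π hP]
    simp [hP]
  · simp [hP]

/-- If `x₁,…,x_n` are conditionally independent, identically distributed, centered Gaussian
given `B` (encoded by the Wick formula for the `B`-valued moments), then the sequence is
`O_n`-invariant. -/
theorem gaussian_implies_orthogonal_invariant {A : Type*} [Ring A] [Algebra ℂ A]
    (φ : A →ₗ[ℂ] ℂ) (hφ1 : φ 1 = 1)
    (B : Subalgebra ℂ A) (E : A →ₗ[ℂ] A)
    (hE1 : E 1 = 1)
    (hErange : ∀ a : A, E a ∈ B)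
    (hEmod : ∀ b b' : A, b ∈ B → b' ∈ B → ∀ a : A, E (b * a * b') = b * E a * b')
    (hφE : ∀ a : A, φ (E a) = φ a)
    (n : ℕ) (hn : 0 < n) (x : Fin n → A)
    (hcomm : ∀ a ∈ Algebra.adjoin ℂ ((B : Set A) ∪ Set.range x),
             ∀ b ∈ Algebra.adjoin ℂ ((B : Set A) ∪ Set.range x), a * b = b * a)
    (hmom_even : ∀ (k : ℕ), 1 ≤ k → ∀ j : Fin k → Fin n, Even k →
      E (List.ofFn (fun t => x (j t))).prod =
        (Nat.card {π : Setoid (Fin k) //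
            (∀ v : Fin k, (block π v).ncard = 2) ∧ π ≤ Setoid.ker j}) •
          (E (x ⟨0, hn⟩ ^ 2)) ^ (k / 2))
    (hmom_odd : ∀ (k : ℕ), 1 ≤ k → ∀ j : Fin k → Fin n, Odd k →
      E (List.ofFn (fun t => x (j t))).prod = 0)
    (g : Matrix (Fin n) (Fin n) ℝ) (hg : g.transpose * g = 1)
    (k : ℕ) (hk : 1 ≤ k) (j : Fin k → Fin n) :
    φ (List.ofFn (fun t => x (j t))).prod =
      ∑ i : Fin k → Fin n,
        ((∏ t : Fin k, g (i t) (j t) : ℝ) : ℂ) * φ (List.ofFn (fun t => x (i t))).prod := by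
  rcases Nat.even_or_odd k with he | ho
  · -- even case
    set C : ℂ := φ ((E (x ⟨0, hn⟩ ^ 2)) ^ (k / 2)) with hC
    have L : ∀ i : Fin k → Fin n,
        φ (List.ofFn (fun t => x (i t))).prod =
          ((Nat.card {π : Setoid (Fin k) //
            (∀ v : Fin k, (block π v).ncard = 2) ∧ π ≤ Setoid.ker i}) : ℂ) * C := by
      intro i
      rw [← hφE, hmom_even k hk i he, map_nsmul, nsmul_eq_mul]
    rw [L j]
    calc ((Nat.card {π : Setoid (Fin k) //
            (∀ v : Fin k, (block π v).ncard = 2) ∧ π ≤ Setoid.ker j}) : ℂ) * C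
        = (∑ i : Fin k → Fin n, (∏ t : Fin k, (g (i t) (j t) : ℂ)) *
            ((Nat.card {π : Setoid (Fin k) //
              (∀ v : Fin k, (block π v).ncard = 2) ∧ π ≤ Setoid.ker i}) : ℂ)) * C := by
          rw [main_sum g hg j]
      _ = ∑ i : Fin k → Fin n,
            ((∏ t : Fin k, g (i t) (j t) : ℝ) : ℂ) * φ (List.ofFn (fun t => x (i t))).prod := by
          rw [Finset.sum_mul]
          refine Finset.sum_congr rfl fun i _ => ?_
          rw [L i]
          push_cast
          ring
  · -- odd case
    have L : ∀ i : Fin k → Fin n, φ (List.ofFn (fun t => x (i t))).prod = 0 := by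
      intro i
      rw [← hφE, hmom_odd k hk i ho, map_zero]
    rw [L j]
    simp [L]
end
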